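/- arXiv:2106.13453 — 4 statements merged into one kernel-verified Lean document; each statement's English description precedes it below -/
import Mathlib

section
/- Let Ω = (t₀,t_f), let v be a {ν₁,…,ν_M}-valued step function with a switching location tᵢ where the left limit vᵢ⁻ and right limit vᵢ⁺ of v differ, and let g = ∇F(v) ∈ L²(Ω). Suppose vᵢ⁻ < vᵢ⁺ and the lower right Dini derivative D⁺ of t ↦ ∫_{tᵢ}^{t} g(s) ds at tᵢ is strictly positive (i.e., liminf_{h↓0} (1/h)∫_{tᵢ}^{tᵢ+h} g(s) ds > ε for some ε > 0). Then there exists h₀ > 0 such that for all 0 < h ≤ h₀, the function d^h := χ_{[tᵢ, tᵢ+h)}·(vᵢ⁻ − vᵢ⁺) satisfies ‖d^h‖_{L¹(Ω)} = h·(vᵢ⁺ − vᵢ⁻), v + d^h takes values in {ν₁,…,ν_M} a.e., and (g, d^h)_{L²(Ω)} ≤ −(ε/2)·h. -/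
open MeasureTheory Filter

/-- descent direction at a switching location. If `v` is a
`{ν₁,…,ν_M} ⊆ ℤ`-valued step function with a switch at `tᵢ ∈ (t₀,t_f)` from the left
value `vᵢ⁻` to the right value `vᵢ⁺`, `vᵢ⁻ < vᵢ⁺`, and the lower right Dini derivative
of `t ↦ ∫_{tᵢ}^t g` at `tᵢ` exceeds some `ε > 0`, then for all sufficiently small
`h > 0` the function `d^h = χ_{[tᵢ,tᵢ+h)}(vᵢ⁻ − vᵢ⁺)` satisfies
`‖d^h‖_{L¹} = h(vᵢ⁺ − vᵢ⁻)`, `v + d^h` is `{ν₁,…,ν_M}`-valued a.e., and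
`(g, d^h)_{L²} ≤ −(ε/2)h`. -/
theorem stmt9 {M : ℕ} (t0 tf : ℝ) (ht : t0 < tf) (ν : Fin M → ℤ)
    (v : ℝ → ℝ) (ti : ℝ) (hti : ti ∈ Set.Ioo t0 tf)
    (vm vp : ℝ)
    (hvm : vm ∈ Set.range (fun i => ((ν i : ℝ))))
    (hvp : vp ∈ Set.range (fun i => ((ν i : ℝ))))
    (hv_vals : ∀ᵐ x ∂(volume.restrict (Set.Ioo t0 tf)),
      v x ∈ Set.range (fun i => ((ν i : ℝ))))
    (δ : ℝ) (hδ : 0 < δ)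
    (hleft : ∀ x : ℝ, ti - δ < x → x < ti → v x = vm)
    (hright : ∀ x : ℝ, ti ≤ x → x < ti + δ → v x = vp)
    (g : ℝ → ℝ) (hg : MemLp g 2 (volume.restrict (Set.Ioo t0 tf)))
    (hjump : vm < vp) (ε : ℝ) (hε : 0 < ε)
    (hDini : ε < liminf (fun h => (∫ s in Set.Ioc ti (ti + h), g s) / h)
      (nhdsWithin 0 (Set.Ioi 0))) :
    ∃ h₀ > 0, ∀ h : ℝ, 0 < h → h ≤ h₀ →
      (∫ x in Set.Ioo t0 tf,
          |Set.indicator (Set.Ico ti (ti + h)) (fun _ => vm - vp) x|) = h * (vp - vm) ∧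
      (∀ᵐ x ∂(volume.restrict (Set.Ioo t0 tf)),
        v x + Set.indicator (Set.Ico ti (ti + h)) (fun _ => vm - vp) x
          ∈ Set.range (fun i => ((ν i : ℝ)))) ∧
      (∫ x in Set.Ioo t0 tf,
          g x * Set.indicator (Set.Ico ti (ti + h)) (fun _ => vm - vp) x)
        ≤ -(ε / 2) * h := by

  -- Extract an eventual lower bound from the liminf hypothesis
  have hev : ∀ᶠ h in nhdsWithin 0 (Set.Ioi 0),
      ε < (∫ s in Set.Ioc ti (ti + h), g s) / h := by
    rw [Filter.liminf_eq] at hDini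
    have hne : {a | ∀ᶠ n in nhdsWithin (0:ℝ) (Set.Ioi 0),
        a ≤ (∫ s in Set.Ioc ti (ti + n), g s) / n}.Nonempty := by
      by_contra hc
      rw [Set.not_nonempty_iff_eq_empty] at hc
      rw [hc, Real.sSup_empty] at hDini
      linarith
    obtain ⟨a, ha, hεa⟩ := exists_lt_of_lt_csSup hne hDini
    simp only [Set.mem_setOf_eq] at ha
    exact ha.mono fun h hh => lt_of_lt_of_le hεa hh
  rw [eventually_nhdsWithin_iff, Metric.eventually_nhds_iff] at hev
  obtain ⟨r, hr, hrP⟩ := hev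
  refine ⟨min (min (r / 2) δ) (tf - ti),
    lt_min (lt_min (by linarith) hδ) (by linarith [hti.2]), ?_⟩
  intro h hh hhle
  have hhr : h < r := by
    have := le_trans hhle (le_trans (min_le_left _ _) (min_le_left _ _)); linarith
  have hhδ : h ≤ δ := le_trans hhle (le_trans (min_le_left _ _) (min_le_right _ _))
  have hhtf : h ≤ tf - ti := le_trans hhle (min_le_right _ _)
  have hP : ε < (∫ s in Set.Ioc ti (ti + h), g s) / h := by
    apply hrP _ hh
    rw [Real.dist_eq, sub_zero, abs_of_pos hh]; exact hhr
  set S := Set.Ico ti (ti + h) with hS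
  have hSm : MeasurableSet S := measurableSet_Ico
  have hSsub : S ⊆ Set.Ioo t0 tf := fun x hx =>
    ⟨lt_of_lt_of_le hti.1 hx.1, lt_of_lt_of_le hx.2 (by linarith)⟩
  have hc1 : vm - vp ≤ -1 := by
    obtain ⟨i, hi⟩ := hvm
    obtain ⟨j, hj⟩ := hvp
    have hi' : ((ν i : ℤ) : ℝ) = vm := hi
    have hj' : ((ν j : ℤ) : ℝ) = vp := hj
    have hij : ν i < ν j := by
      have : ((ν i : ℤ) : ℝ) < ((ν j : ℤ) : ℝ) := by rw [hi', hj']; exact hjump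
      exact_mod_cast this
    have h1 : ν i + 1 ≤ ν j := hij
    have h2 : ((ν i : ℤ) : ℝ) + 1 ≤ ((ν j : ℤ) : ℝ) := by exact_mod_cast h1
    rw [hi', hj'] at h2; linarith
  refine ⟨?_, ?_, ?_⟩
  · have e1 : ∫ x in Set.Ioo t0 tf, |S.indicator (fun _ => vm - vp) x|
        = ∫ x in Set.Ioo t0 tf, S.indicator (fun _ => vp - vm) x :=
      integral_congr_ae (Filter.Eventually.of_forall fun x => by
        by_cases hx : x ∈ S <;>
          simp [hx, abs_of_neg (show vm - vp < 0 by linarith), neg_sub])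
    rw [e1, integral_indicator hSm, Measure.restrict_restrict hSm,
      Set.inter_eq_self_of_subset_left hSsub, setIntegral_const, smul_eq_mul,
      measureReal_def, Real.volume_Ico, add_sub_cancel_left, ENNReal.toReal_ofReal hh.le]
  · filter_upwards [hv_vals] with x hx
    by_cases hxS : x ∈ S
    · rw [Set.indicator_of_mem hxS]
      have hv : v x = vp := hright x hxS.1 (lt_of_lt_of_le hxS.2 (by linarith))
      rw [hv, show vp + (vm - vp) = vm by ring]
      exact hvm
    · rw [Set.indicator_of_notMem hxS, add_zero]; exact hx
  · have e2 : ∫ x in Set.Ioo t0 tf, g x * S.indicator (fun _ => vm - vp) x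
        = ∫ x in Set.Ioo t0 tf, S.indicator (fun y => g y * (vm - vp)) x :=
      integral_congr_ae (Filter.Eventually.of_forall fun x => by
        by_cases hx : x ∈ S <;> simp [hx])
    rw [e2, integral_indicator hSm, Measure.restrict_restrict hSm,
      Set.inter_eq_self_of_subset_left hSsub, integral_mul_const]
    have e3 : ∫ x in S, g x = ∫ s in Set.Ioc ti (ti + h), g s := by
      rw [hS, integral_Ico_eq_integral_Ioo, integral_Ioc_eq_integral_Ioo]
    rw [e3]
    have hI : ε * h < ∫ s in Set.Ioc ti (ti + h), g s := (lt_div_iff₀ hh).mp hP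
    nlinarith [mul_le_mul_of_nonpos_right hI.le (show vm - vp ≤ 0 by linarith),
      mul_nonneg hε.le hh.le,
      mul_nonpos_of_nonneg_of_nonpos (mul_nonneg hε.le hh.le)
        (show vm - vp + 1 ≤ 0 by linarith)]
end

section
/- Let Ω = (t₀,t_f), let F satisfy: F twice continuously Fréchet differentiable on L²(Ω) with Hessian bounded by the product of L¹ norms. Let v = v^{t,a} be a {ν₁,…,ν_M}-valued step function with switch locations t₁ < … < t_{N−1} and heights a₁ ≠ a₂ ≠ … ≠ a_N that is r-optimal for the TV-regularized integer control problem for some r > 0. Then the switch location vector t is a local minimizer of the switching-location problem minimizing t' ↦ F(v^{t',a}) over ordered switch locations. -/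
open MeasureTheory ENNReal

/-- The total variation of (the equivalence class of) `v` on the interval `(t0, tf)`:
the infimum of the pointwise variations over all representatives that agree with `v`
almost everywhere. -/
noncomputable def TV1 (t0 tf : ℝ) (v : ℝ → ℝ) : ℝ≥0∞ :=
  ⨅ (u : ℝ → ℝ) (_ : u =ᵐ[volume.restrict (Set.Ioo t0 tf)] v),
    eVariationOn u (Set.Ioo t0 tf)

/-- The step function `v^{t,a}` taking the value `a i` on `[t i, t (i+1))` for `i < N`. -/
noncomputable def stepFn (N : ℕ) (t : ℕ → ℝ) (a : ℕ → ℝ) : ℝ → ℝ :=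
  fun x => ∑ i ∈ Finset.range N, Set.indicator (Set.Ico (t i) (t (i+1))) (fun _ => a i) x

namespace Stmt11Aux

lemma mono_of_adj {N : ℕ} {s : ℕ → ℝ} (h : ∀ i < N, s i ≤ s (i+1)) :
    ∀ j k, j ≤ k → k ≤ N → s j ≤ s k := by
  intro j k hjk hkN
  induction k with
  | zero => simp_all
  | succ k ih =>
    rcases Nat.eq_or_lt_of_le hjk with rfl | hlt
    · exact le_rfl
    · exact le_trans (ih (by omega) (by omega)) (h k (by omega))

lemma step_eval {N : ℕ} {a : ℕ → ℝ} {s : ℕ → ℝ} (hmono : ∀ i < N, s i ≤ s (i+1))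
    {i : ℕ} (hi : i < N) {x : ℝ} (h1 : s i ≤ x) (h2 : x < s (i+1)) :
    stepFn N s a x = a i := by
  unfold stepFn
  rw [Finset.sum_eq_single i]
  · rw [Set.indicator_of_mem (Set.mem_Ico.mpr ⟨h1, h2⟩)]
  · intro j hj hne
    apply Set.indicator_of_notMem
    rw [Set.mem_Ico, not_and_or, not_le, not_lt]
    have hjN := Finset.mem_range.mp hj
    rcases lt_or_gt_of_ne hne with hji | hij
    · exact Or.inr (le_trans (mono_of_adj hmono (j+1) i hji (le_of_lt hi)) h1)
    · exact Or.inl (lt_of_lt_of_le h2 (mono_of_adj hmono (i+1) j hij (by omega)))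
  · intro hmem; exact absurd (Finset.mem_range.mpr hi) hmem

lemma step_idx {N : ℕ} {s : ℕ → ℝ} (hmono : ∀ i < N, s i ≤ s (i+1)) (hN : 0 < N)
    {t0 tf x : ℝ} (h0 : s 0 = t0) (hNf : s N = tf) (hx : x ∈ Set.Ioo t0 tf) :
    ∃ i, i < N ∧ s i ≤ x ∧ x < s (i+1) := by
  haveI inst : DecidablePred (fun j => s j ≤ x) := fun j => Real.decidableLE _ _
  have hP0 : s 0 ≤ x := by rw [h0]; exact le_of_lt hx.1
  refine ⟨Nat.findGreatest (fun j => s j ≤ x) (N-1), ?_, ?_, ?_⟩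
  · have := @Nat.findGreatest_le (fun j => s j ≤ x) inst (N-1); omega
  · exact Nat.findGreatest_spec (P := fun j => s j ≤ x) (m := 0) (n := N-1) (Nat.zero_le _) hP0
  · by_cases hcase : Nat.findGreatest (fun j => s j ≤ x) (N-1) = N - 1
    · have hiS : Nat.findGreatest (fun j => s j ≤ x) (N-1) + 1 = N := by omega
      rw [hiS, hNf]; exact hx.2
    · have hle := Nat.findGreatest_le (P := fun j => s j ≤ x) (N-1)
      have hnP : ¬ (s (Nat.findGreatest (fun j => s j ≤ x) (N-1) + 1) ≤ x) :=
        Nat.findGreatest_is_greatest (P := fun j => s j ≤ x) (n := N-1)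
          (k := Nat.findGreatest (fun j => s j ≤ x) (N-1) + 1) (Nat.lt_succ_self _) (by omega)
      exact lt_of_not_ge hnP

lemma sum_Ico_tele {g : ℕ → ℝ≥0∞} {m : ℕ → ℕ} (hm : Monotone m) (n : ℕ) :
    ∑ j ∈ Finset.range n, ∑ k ∈ Finset.Ico (m j) (m (j+1)), g k
      = ∑ k ∈ Finset.Ico (m 0) (m n), g k := by
  induction n with
  | zero => simp
  | succ n ih =>
    rw [Finset.sum_range_succ, ih, Finset.sum_Ico_consecutive]
    · exact hm (Nat.zero_le n)
    · exact hm (Nat.le_succ n)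

lemma evar_le {N : ℕ} {a : ℕ → ℝ} {t0 tf : ℝ} {s : ℕ → ℝ}
    (hmono : ∀ i < N, s i ≤ s (i+1)) (hN : 0 < N) (h0 : s 0 = t0) (hNf : s N = tf) :
    eVariationOn (stepFn N s a) (Set.Ioo t0 tf)
      ≤ ENNReal.ofReal (∑ k ∈ Finset.range (N-1), |a (k+1) - a k|) := by
  apply iSup_le
  rintro ⟨n, u, hu, us⟩
  have hidx : ∀ j, ∃ i, i < N ∧ s i ≤ u j ∧ u j < s (i+1) :=
    fun j => step_idx hmono hN h0 hNf (us j)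
  choose m hmN hm1 hm2 using hidx
  have hval : ∀ j, stepFn N s a (u j) = a (m j) :=
    fun j => step_eval hmono (hmN j) (hm1 j) (hm2 j)
  have hmmono : Monotone m := by
    intro j k hjk
    by_contra hc
    push_neg at hc
    have h1 : s (m k + 1) ≤ s (m j) := mono_of_adj hmono _ _ hc (le_of_lt (hmN j))
    exact lt_irrefl _ (lt_of_lt_of_le (hm2 k) (le_trans h1 (le_trans (hm1 j) (hu hjk))))
  calc ∑ j ∈ Finset.range n, edist (stepFn N s a (u (j+1))) (stepFn N s a (u j))
      ≤ ∑ j ∈ Finset.range n, ∑ k ∈ Finset.Ico (m j) (m (j+1)),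
          ENNReal.ofReal |a (k+1) - a k| := by
        apply Finset.sum_le_sum
        intro j _
        rw [hval j, hval (j+1), edist_dist]
        have hd : dist (a (m (j+1))) (a (m j))
            ≤ ∑ k ∈ Finset.Ico (m j) (m (j+1)), dist (a k) (a (k+1)) := by
          rw [dist_comm]
          exact dist_le_Ico_sum_dist a (hmmono (Nat.le_succ j))
        calc ENNReal.ofReal (dist (a (m (j+1))) (a (m j)))
            ≤ ENNReal.ofReal (∑ k ∈ Finset.Ico (m j) (m (j+1)), dist (a k) (a (k+1))) :=
              ENNReal.ofReal_le_ofReal hd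
          _ = ∑ k ∈ Finset.Ico (m j) (m (j+1)), ENNReal.ofReal (dist (a k) (a (k+1))) :=
              ENNReal.ofReal_sum_of_nonneg (fun k _ => dist_nonneg)
          _ = ∑ k ∈ Finset.Ico (m j) (m (j+1)), ENNReal.ofReal |a (k+1) - a k| := by
              apply Finset.sum_congr rfl
              intro k _
              rw [Real.dist_eq, abs_sub_comm]
    _ = ∑ k ∈ Finset.Ico (m 0) (m n), ENNReal.ofReal |a (k+1) - a k| := sum_Ico_tele hmmono n
    _ ≤ ∑ k ∈ Finset.range (N-1), ENNReal.ofReal |a (k+1) - a k| := by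
        apply Finset.sum_le_sum_of_subset
        intro k hk
        rw [Finset.mem_Ico] at hk
        rw [Finset.mem_range]
        have := hmN n
        omega
    _ = ENNReal.ofReal (∑ k ∈ Finset.range (N-1), |a (k+1) - a k|) :=
        (ENNReal.ofReal_sum_of_nonneg (fun k _ => abs_nonneg _)).symm

lemma evar_ge {N : ℕ} {a : ℕ → ℝ} {t0 tf : ℝ} {t : ℕ → ℝ}
    (hN : 0 < N) (ht0 : t 0 = t0) (htN : t N = tf) (ht_mono : ∀ i < N, t i < t (i+1))
    (u : ℝ → ℝ) (hu : u =ᵐ[volume.restrict (Set.Ioo t0 tf)] stepFn N t a) :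
    ENNReal.ofReal (∑ k ∈ Finset.range (N-1), |a (k+1) - a k|)
      ≤ eVariationOn u (Set.Ioo t0 tf) := by
  have hmono : ∀ i < N, t i ≤ t (i+1) := fun i hi => le_of_lt (ht_mono i hi)
  have hsub : ∀ i < N, Set.Ioo (t i) (t (i+1)) ⊆ Set.Ioo t0 tf := by
    intro i hi x hx
    constructor
    · exact lt_of_le_of_lt (ht0 ▸ mono_of_adj hmono 0 i (Nat.zero_le _) (le_of_lt hi)) hx.1
    · exact lt_of_lt_of_le hx.2 (htN ▸ mono_of_adj hmono (i+1) N hi (le_refl N))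
  -- find a point in each interval where u agrees with the step function
  have hpick : ∀ i, ∃ x : ℝ, i < N → (x ∈ Set.Ioo (t i) (t (i+1)) ∧ u x = a i) := by
    intro i
    by_cases hi : i < N
    · have hD : (volume.restrict (Set.Ioo t0 tf)) {x | u x ≠ stepFn N t a x} = 0 := hu
      have hvol : (volume.restrict (Set.Ioo t0 tf)) (Set.Ioo (t i) (t (i+1))) ≠ 0 := by
        rw [Measure.restrict_apply measurableSet_Ioo,
          Set.inter_eq_self_of_subset_left (hsub i hi), Real.volume_Ioo]
        simp only [ne_eq, ENNReal.ofReal_eq_zero, not_le]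
        linarith [ht_mono i hi]
      have : ¬ (Set.Ioo (t i) (t (i+1)) ⊆ {x | u x ≠ stepFn N t a x}) := by
        intro hss
        exact hvol (le_antisymm (hD ▸ measure_mono hss) zero_le)
      rw [Set.not_subset] at this
      obtain ⟨x, hx1, hx2⟩ := this
      refine ⟨x, fun _ => ⟨hx1, ?_⟩⟩
      have : u x = stepFn N t a x := not_not.mp hx2
      rw [this, step_eval hmono hi (le_of_lt hx1.1) hx1.2]
    · exact ⟨t0, fun h => absurd h hi⟩
  choose x hx using hpick
  have hxmono : ∀ p q, p ≤ q → q < N → x p ≤ x q := by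
    intro p q hpq hqN
    rcases Nat.eq_or_lt_of_le hpq with rfl | hlt
    · exact le_rfl
    · have h1 := (hx p (lt_of_lt_of_le hlt (le_of_lt hqN))).1.2
      have h2 := (hx q hqN).1.1
      have h3 : t (p+1) ≤ t q := mono_of_adj hmono (p+1) q hlt (le_of_lt hqN)
      linarith
  set y : ℕ → ℝ := fun j => x (min j (N-1)) with hy
  have hymono : Monotone y := by
    intro j k hjk
    exact hxmono _ _ (min_le_min_right _ hjk) (by omega)
  have hymem : ∀ j, y j ∈ Set.Ioo t0 tf := by
    intro j
    have hm : min j (N-1) < N := by omega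
    exact hsub _ hm (hx _ hm).1
  have hkey := eVariationOn.sum_le (f := u) (n := N-1) hymono hymem
  refine le_trans (le_of_eq ?_) hkey
  rw [ENNReal.ofReal_sum_of_nonneg (fun k _ => abs_nonneg _)]
  apply Finset.sum_congr rfl
  intro j hj
  rw [Finset.mem_range] at hj
  have hyj : y j = x j := by rw [hy]; simp only [min_eq_left (by omega : j ≤ N-1)]
  have hyj1 : y (j+1) = x (j+1) := by rw [hy]; simp only [min_eq_left (by omega : j+1 ≤ N-1)]
  rw [hyj, hyj1, (hx j (by omega)).2, (hx (j+1) (by omega)).2, edist_dist, Real.dist_eq]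
lemma ind_diff_le (b c b' c' cst x : ℝ) :
    |Set.indicator (Set.Ico b c) (fun _ => cst) x - Set.indicator (Set.Ico b' c') (fun _ => cst) x|
      ≤ |cst| * (Set.indicator (Set.Ico (min b b') (max b b')) (fun _ => (1:ℝ)) x
               + Set.indicator (Set.Ico (min c c') (max c c')) (fun _ => (1:ℝ)) x) := by
  have hind : ∀ s : Set ℝ, (0:ℝ) ≤ Set.indicator s (fun _ => (1:ℝ)) x :=
    fun s => Set.indicator_nonneg (fun _ _ => zero_le_one) x
  have key : ∀ p q pm pM : ℝ, p ≤ x → x < q → (x < pm ∨ pM ≤ x) →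
      (1:ℝ) ≤ Set.indicator (Set.Ico (min p pm) (max p pm)) (fun _ => (1:ℝ)) x
               + Set.indicator (Set.Ico (min q pM) (max q pM)) (fun _ => (1:ℝ)) x := by
    intro p q pm pM h1 h2 hc
    rcases hc with hc | hc
    · have hmem : x ∈ Set.Ico (min p pm) (max p pm) :=
        ⟨le_trans (min_le_left _ _) h1, lt_of_lt_of_le hc (le_max_right _ _)⟩
      rw [Set.indicator_of_mem hmem]
      linarith [hind (Set.Ico (min q pM) (max q pM))]
    · have hmem : x ∈ Set.Ico (min q pM) (max q pM) :=
        ⟨le_trans (min_le_right _ _) hc, lt_of_lt_of_le h2 (le_max_left _ _)⟩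
      rw [Set.indicator_of_mem hmem]
      linarith [hind (Set.Ico (min p pm) (max p pm))]
  by_cases h1 : x ∈ Set.Ico b c <;> by_cases h2 : x ∈ Set.Ico b' c'
  · rw [Set.indicator_of_mem h1, Set.indicator_of_mem h2, sub_self, abs_zero]
    have h3 := hind (Set.Ico (min b b') (max b b'))
    have h4 := hind (Set.Ico (min c c') (max c c'))
    nlinarith [abs_nonneg cst]
  · rw [Set.indicator_of_mem h1, Set.indicator_of_notMem h2, sub_zero]
    rw [Set.mem_Ico, not_and_or, not_le, not_lt] at h2
    have := key b c b' c' h1.1 h1.2 h2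
    nlinarith [abs_nonneg cst, hind (Set.Ico (min b b') (max b b')),
      hind (Set.Ico (min c c') (max c c'))]
  · rw [Set.indicator_of_notMem h1, Set.indicator_of_mem h2, zero_sub, abs_neg]
    rw [Set.mem_Ico, not_and_or, not_le, not_lt] at h1
    have := key b' c' b c h2.1 h2.2 h1
    rw [min_comm b' b, max_comm b' b, min_comm c' c, max_comm c' c] at this
    nlinarith [abs_nonneg cst, hind (Set.Ico (min b b') (max b b')),
      hind (Set.Ico (min c c') (max c c'))]
  · rw [Set.indicator_of_notMem h1, Set.indicator_of_notMem h2, sub_self, abs_zero]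
    have h3 := hind (Set.Ico (min b b') (max b b'))
    have h4 := hind (Set.Ico (min c c') (max c c'))
    nlinarith [abs_nonneg cst]

lemma ind_integrable (t0 tf p q c : ℝ) :
    Integrable (fun x => Set.indicator (Set.Ico p q) (fun _ => c) x)
      (volume.restrict (Set.Ioo t0 tf)) := by
  rw [integrable_indicator_iff measurableSet_Ico]
  refine (integrableOn_const_iff (C := c)).mpr (Or.inr ?_)
  rw [Measure.restrict_apply measurableSet_Ico]
  exact lt_of_le_of_lt (measure_mono Set.inter_subset_left)
    (by rw [Real.volume_Ico]; exact ENNReal.ofReal_lt_top)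

lemma integral_ind_le (t0 tf p q : ℝ) (hpq : p ≤ q) :
    ∫ x in Set.Ioo t0 tf, Set.indicator (Set.Ico p q) (fun _ => (1:ℝ)) x ≤ q - p := by
  rw [MeasureTheory.integral_indicator_const (1:ℝ) measurableSet_Ico, smul_eq_mul, mul_one]
  have h1 : (volume.restrict (Set.Ioo t0 tf)) (Set.Ico p q) ≤ ENNReal.ofReal (q - p) := by
    rw [Measure.restrict_apply measurableSet_Ico]
    exact le_trans (measure_mono Set.inter_subset_left) (le_of_eq Real.volume_Ico)
  calc ((volume.restrict (Set.Ioo t0 tf)) (Set.Ico p q)).toReal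
      ≤ (ENNReal.ofReal (q - p)).toReal := ENNReal.toReal_mono (by simp) h1
    _ = q - p := ENNReal.toReal_ofReal (by linarith)

lemma stepFn_integrable (N : ℕ) (s a : ℕ → ℝ) (t0 tf : ℝ) :
    Integrable (stepFn N s a) (volume.restrict (Set.Ioo t0 tf)) := by
  unfold stepFn
  exact integrable_finset_sum _ (fun i _ => ind_integrable t0 tf _ _ _)

lemma l1_bound (N : ℕ) (a s s' : ℕ → ℝ) (t0 tf : ℝ) :
    ∫ x in Set.Ioo t0 tf, |stepFn N s a x - stepFn N s' a x|
      ≤ ∑ i ∈ Finset.range N, |a i| * (|s i - s' i| + |s (i+1) - s' (i+1)|) := by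
  have hpt : ∀ x, |stepFn N s a x - stepFn N s' a x|
      ≤ ∑ i ∈ Finset.range N, |a i| *
          (Set.indicator (Set.Ico (min (s i) (s' i)) (max (s i) (s' i))) (fun _ => (1:ℝ)) x
           + Set.indicator (Set.Ico (min (s (i+1)) (s' (i+1))) (max (s (i+1)) (s' (i+1))))
              (fun _ => (1:ℝ)) x) := by
    intro x
    unfold stepFn
    rw [← Finset.sum_sub_distrib]
    refine le_trans (Finset.abs_sum_le_sum_abs _ _) (Finset.sum_le_sum ?_)
    intro i _
    exact ind_diff_le _ _ _ _ _ _
  have hint1 : Integrable (fun x => |stepFn N s a x - stepFn N s' a x|)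
      (volume.restrict (Set.Ioo t0 tf)) :=
    ((stepFn_integrable N s a t0 tf).sub (stepFn_integrable N s' a t0 tf)).abs
  have hint0 : ∀ i : ℕ, Integrable (fun x => |a i| *
          (Set.indicator (Set.Ico (min (s i) (s' i)) (max (s i) (s' i))) (fun _ => (1:ℝ)) x
           + Set.indicator (Set.Ico (min (s (i+1)) (s' (i+1))) (max (s (i+1)) (s' (i+1))))
              (fun _ => (1:ℝ)) x)) (volume.restrict (Set.Ioo t0 tf)) :=
    fun i => (((ind_integrable t0 tf _ _ _).add (ind_integrable t0 tf _ _ _)).const_mul _)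
  have hint2 : Integrable (fun x => ∑ i ∈ Finset.range N, |a i| *
          (Set.indicator (Set.Ico (min (s i) (s' i)) (max (s i) (s' i))) (fun _ => (1:ℝ)) x
           + Set.indicator (Set.Ico (min (s (i+1)) (s' (i+1))) (max (s (i+1)) (s' (i+1))))
              (fun _ => (1:ℝ)) x)) (volume.restrict (Set.Ioo t0 tf)) :=
    integrable_finset_sum _ (fun i _ => hint0 i)
  refine le_trans (integral_mono hint1 hint2 hpt) ?_
  rw [integral_finset_sum _ (fun i _ => hint0 i)]
  apply Finset.sum_le_sum
  intro i _
  rw [show (fun x => |a i| *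
          (Set.indicator (Set.Ico (min (s i) (s' i)) (max (s i) (s' i))) (fun _ => (1:ℝ)) x
           + Set.indicator (Set.Ico (min (s (i+1)) (s' (i+1))) (max (s (i+1)) (s' (i+1))))
              (fun _ => (1:ℝ)) x)) = (fun x => |a i| * _) from rfl]
  rw [MeasureTheory.integral_const_mul]
  rw [integral_add (ind_integrable t0 tf _ _ _) (ind_integrable t0 tf _ _ _)]
  have e1 := integral_ind_le t0 tf (min (s i) (s' i)) (max (s i) (s' i)) min_le_max
  have e2 := integral_ind_le t0 tf (min (s (i+1)) (s' (i+1))) (max (s (i+1)) (s' (i+1))) min_le_max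
  rw [max_sub_min_eq_abs, abs_sub_comm] at e1 e2
  exact mul_le_mul_of_nonneg_left (add_le_add e1 e2) (abs_nonneg (a i))

end Stmt11Aux

open Stmt11Aux in
/-- if a `{ν₁,…,ν_M} ⊆ ℤ`-valued step function `v = v^{t,a}` (with
`F : L²((t₀,t_f)) → ℝ` twice continuously Fréchet differentiable with Hessian bounded
by products of `L¹` norms) is `r`-optimal for the TV-regularized integer control
problem for some `r > 0`, then the switch-location vector `t` is a local minimizer of
`t' ↦ F(v^{t',a})` over ordered switch locations. -/
theorem stmt11 {M : ℕ} (t0 tf : ℝ) (ht : t0 < tf) (ν : Fin M → ℤ)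
    (F : Lp ℝ 2 (volume.restrict (Set.Ioo t0 tf)) → ℝ)
    (hF : ContDiff ℝ 2 F) (C : ℝ) (hC : 0 < C)
    (hHess : ∀ ξ u w : Lp ℝ 2 (volume.restrict (Set.Ioo t0 tf)),
      |iteratedFDeriv ℝ 2 F ξ ![u, w]|
        ≤ C * (∫ x in Set.Ioo t0 tf, |u x|) * (∫ x in Set.Ioo t0 tf, |w x|))
    (α r : ℝ) (hα : 0 < α) (hr : 0 < r)
    (N : ℕ) (hN : 0 < N) (a t : ℕ → ℝ)
    (ha_vals : ∀ i < N, a i ∈ Set.range (fun i => ((ν i : ℝ))))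
    (ha_adj : ∀ i, i + 1 < N → a i ≠ a (i + 1))
    (ht0 : t 0 = t0) (htN : t N = tf) (ht_mono : ∀ i < N, t i < t (i + 1))
    (v : Lp ℝ 2 (volume.restrict (Set.Ioo t0 tf)))
    (hv_rep : ⇑v =ᵐ[volume.restrict (Set.Ioo t0 tf)] stepFn N t a)
    (hropt : ∀ w : Lp ℝ 2 (volume.restrict (Set.Ioo t0 tf)),
      (∀ᵐ x ∂(volume.restrict (Set.Ioo t0 tf)), w x ∈ Set.range (fun i => ((ν i : ℝ)))) →
      (∫ x in Set.Ioo t0 tf, |v x - w x|) ≤ r →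
      (F v : EReal) + (α : EReal) * (TV1 t0 tf ⇑v : EReal)
        ≤ (F w : EReal) + (α : EReal) * (TV1 t0 tf ⇑w : EReal)) :
    ∃ δ > 0, ∀ t' : ℕ → ℝ,
      t' 0 = t0 → t' N = tf → (∀ i < N, t' i ≤ t' (i + 1)) →
      (∀ i, 0 < i → i < N → |t' i - t i| < δ) →
      ∀ w : Lp ℝ 2 (volume.restrict (Set.Ioo t0 tf)),
        ⇑w =ᵐ[volume.restrict (Set.Ioo t0 tf)] stepFn N t' a →
        F v ≤ F w := by
  classical
  set S : ℝ := ∑ k ∈ Finset.range (N-1), |a (k+1) - a k| with hS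
  have hS0 : 0 ≤ S := Finset.sum_nonneg (fun k _ => abs_nonneg _)
  set B : ℝ := ∑ i ∈ Finset.range N, |a i| with hB
  have hB0 : 0 ≤ B := Finset.sum_nonneg (fun k _ => abs_nonneg _)
  have hden : (0:ℝ) < 2*B+1 := by linarith
  refine ⟨r / (2*B+1), by positivity, ?_⟩
  intro t' h'0 h'N h'mono h'close w hw_rep
  have hmono : ∀ i < N, t i ≤ t (i+1) := fun i hi => le_of_lt (ht_mono i hi)
  -- the perturbed control takes admissible values a.e.
  have hvals : ∀ᵐ x ∂(volume.restrict (Set.Ioo t0 tf)),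
      w x ∈ Set.range (fun i => ((ν i : ℝ))) := by
    filter_upwards [hw_rep, ae_restrict_mem measurableSet_Ioo] with x hx hmem
    rw [hx]
    obtain ⟨i, hiN, hi1, hi2⟩ := step_idx h'mono hN h'0 h'N hmem
    rw [step_eval h'mono hiN hi1 hi2]
    exact ha_vals i hiN
  -- the L¹ distance is at most r
  have hdelta : ∀ i ≤ N, |t i - t' i| ≤ r/(2*B+1) := by
    intro i hi
    rcases Nat.eq_zero_or_pos i with rfl | hpos
    · rw [ht0, h'0, sub_self, abs_zero]; positivity
    rcases Nat.eq_or_lt_of_le hi with rfl | hlt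
    · rw [htN, h'N, sub_self, abs_zero]; positivity
    · rw [abs_sub_comm]; exact le_of_lt (h'close i hpos hlt)
  have hl1 : (∫ x in Set.Ioo t0 tf, |v x - w x|) ≤ r := by
    have hcongr : (∫ x in Set.Ioo t0 tf, |v x - w x|)
        = ∫ x in Set.Ioo t0 tf, |stepFn N t a x - stepFn N t' a x| := by
      apply integral_congr_ae
      filter_upwards [hv_rep, hw_rep] with x h1 h2
      rw [h1, h2]
    rw [hcongr]
    refine le_trans (l1_bound N a t t' t0 tf) ?_
    calc ∑ i ∈ Finset.range N, |a i| * (|t i - t' i| + |t (i+1) - t' (i+1)|)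
        ≤ ∑ i ∈ Finset.range N, |a i| * (r/(2*B+1) + r/(2*B+1)) := by
          apply Finset.sum_le_sum
          intro i hi
          rw [Finset.mem_range] at hi
          exact mul_le_mul_of_nonneg_left
            (add_le_add (hdelta i (by omega)) (hdelta (i+1) (by omega))) (abs_nonneg (a i))
      _ = B * (r/(2*B+1) + r/(2*B+1)) := by rw [← Finset.sum_mul]
      _ ≤ r := by
          have heq : B * (r/(2*B+1) + r/(2*B+1)) = r * (2*B)/(2*B+1) := by ring
          rw [heq, div_le_iff₀ hden]
          nlinarith
  -- total variation computations
  have hTVv : TV1 t0 tf ⇑v = ENNReal.ofReal S := by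
    apply le_antisymm
    · refine le_trans ?_ (evar_le (a := a) hmono hN ht0 htN)
      rw [TV1]
      exact iInf_le_of_le (stepFn N t a) (iInf_le_of_le hv_rep.symm le_rfl)
    · rw [TV1]
      exact le_iInf₂ (fun u hu => evar_ge hN ht0 htN ht_mono u (hu.trans hv_rep))
  have hTVw_le : TV1 t0 tf ⇑w ≤ ENNReal.ofReal S := by
    refine le_trans ?_ (evar_le (a := a) h'mono hN h'0 h'N)
    rw [TV1]
    exact iInf_le_of_le (stepFn N t' a) (iInf_le_of_le hw_rep.symm le_rfl)
  -- conclude via r-optimality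
  have hkey := hropt w hvals hl1
  have hfin : TV1 t0 tf ⇑w ≠ ⊤ := ne_top_of_le_ne_top ENNReal.ofReal_ne_top hTVw_le
  set Sw : ℝ := (TV1 t0 tf ⇑w).toReal with hSw
  have hSw0 : 0 ≤ Sw := ENNReal.toReal_nonneg
  have hSwS : Sw ≤ S := by
    have := ENNReal.toReal_mono ENNReal.ofReal_ne_top hTVw_le
    rwa [ENNReal.toReal_ofReal hS0] at this
  have hw_eq : TV1 t0 tf ⇑w = ENNReal.ofReal Sw := (ENNReal.ofReal_toReal hfin).symm
  rw [hTVv, hw_eq] at hkey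
  have hc1 : ((ENNReal.ofReal S : ℝ≥0∞) : EReal) = ((S:ℝ) : EReal) := by
    rw [EReal.coe_ennreal_ofReal]
    norm_cast
    exact max_eq_left hS0
  have hc2 : ((ENNReal.ofReal Sw : ℝ≥0∞) : EReal) = ((Sw:ℝ) : EReal) := by
    rw [EReal.coe_ennreal_ofReal]
    norm_cast
    exact max_eq_left hSw0
  rw [hc1, hc2, ← EReal.coe_mul, ← EReal.coe_mul, ← EReal.coe_add, ← EReal.coe_add,
    EReal.coe_le_coe_iff] at hkey
  nlinarith [hkey, mul_le_mul_of_nonneg_left hSwS (le_of_lt hα)]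
end

section
/- Let Ω = (t₀,t_f) and let v be a {ν₁,…,ν_M}-valued step function with switch locations t₁ < … < t_{N−1}. Suppose ∇F(v) ∈ L²(Ω) and every switching location tᵢ is a Lebesgue point of ∇F(v). Then all four Dini derivatives of t ↦ ∫_{tᵢ}^{t} ∇F(v)(s) ds at tᵢ coincide with the Lebesgue value ∇F(v)(tᵢ), and the SL-stationarity conditions (sign conditions on one-sided Dini derivatives depending on whether aᵢ < aᵢ₊₁ or aᵢ₊₁ < aᵢ) are equivalent to ∇F(v)(tᵢ) = 0 for all i ∈ {1,…,N−1}. -/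
open MeasureTheory Filter

lemma stmt12_aux (c : ℝ) (g : ℝ → ℝ) (δ : ℝ) (hδ : 0 < δ)
    (hint : IntegrableOn g (Set.Ioo (c - δ) (c + δ)))
    (hLeb : Tendsto (fun h : ℝ => (∫ s in Set.Ioo (c - h) (c + h), |g s - g c|) / (2 * h))
      (nhdsWithin 0 (Set.Ioi 0)) (nhds 0)) :
    Tendsto (fun h : ℝ => (∫ s in Set.Ioc c (c + h), g s) / h)
      (nhdsWithin 0 (Set.Ioi 0)) (nhds (g c)) ∧
    Tendsto (fun h : ℝ => (∫ s in Set.Ioc (c - h) c, g s) / h)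
      (nhdsWithin 0 (Set.Ioi 0)) (nhds (g c)) := by
  have hmem : Set.Ioo (0:ℝ) δ ∈ nhdsWithin 0 (Set.Ioi 0) :=
    Ioo_mem_nhdsGT_of_mem ⟨le_refl 0, hδ⟩
  have h2 : Tendsto (fun h : ℝ => 2 * ((∫ s in Set.Ioo (c - h) (c + h), |g s - g c|) / (2 * h)))
      (nhdsWithin 0 (Set.Ioi 0)) (nhds 0) := by
    simpa using hLeb.const_mul 2
  -- key eventual bound, for either side
  have key : ∀ h : ℝ, h ∈ Set.Ioo (0:ℝ) δ → ∀ I : Set ℝ, I ⊆ Set.Ioo (c - h) (c + h) →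
      MeasurableSet I → (volume I).toReal = h →
      |(∫ s in I, g s) / h - g c| ≤ 2 * ((∫ s in Set.Ioo (c - h) (c + h), |g s - g c|) / (2 * h)) := by
    intro h hh I hIsub hImeas hIvol
    have hsub : Set.Ioo (c - h) (c + h) ⊆ Set.Ioo (c - δ) (c + δ) :=
      Set.Ioo_subset_Ioo (by linarith [hh.2]) (by linarith [hh.2])
    have hIg : IntegrableOn g I := (hint.mono_set (hIsub.trans hsub))
    have hIg2 : IntegrableOn (fun s => g s - g c) I :=
      hIg.sub (integrableOn_const (ne_of_lt (by
        have := measure_mono hIsub (μ := volume)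
        exact lt_of_le_of_lt this measure_Ioo_lt_top)))
    have habs : IntegrableOn (fun s => |g s - g c|) (Set.Ioo (c - h) (c + h)) :=
      ((hint.mono_set hsub).sub (integrableOn_const (ne_of_lt measure_Ioo_lt_top))).abs
    have hstep : (∫ s in I, g s) - h * g c = ∫ s in I, (g s - g c) := by
      rw [integral_sub hIg (integrableOn_const (ne_of_lt (by
        have := measure_mono hIsub (μ := volume)
        exact lt_of_le_of_lt this measure_Ioo_lt_top)))]
      simp [setIntegral_const, Measure.real, hIvol]
    have hb1 : |∫ s in I, (g s - g c)| ≤ ∫ s in I, |g s - g c| := by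
      simpa [Real.norm_eq_abs] using norm_integral_le_integral_norm (μ := volume.restrict I) (fun s => g s - g c)
    have hb2 : (∫ s in I, |g s - g c|) ≤ ∫ s in Set.Ioo (c - h) (c + h), |g s - g c| := by
      apply setIntegral_mono_set habs
      · exact Filter.Eventually.of_forall (fun s => abs_nonneg _)
      · exact Filter.Eventually.of_forall hIsub
    have hpos : (0:ℝ) < h := hh.1
    have heq : (∫ s in I, g s) / h - g c = (∫ s in I, (g s - g c)) / h := by
      rw [← hstep]; field_simp
    rw [heq, abs_div, abs_of_pos hpos, div_le_iff₀ hpos]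
    calc |∫ s in I, (g s - g c)| ≤ ∫ s in Set.Ioo (c - h) (c + h), |g s - g c| := hb1.trans hb2
      _ = 2 * ((∫ s in Set.Ioo (c - h) (c + h), |g s - g c|) / (2 * h)) * h := by
          field_simp
  constructor
  · rw [← tendsto_sub_nhds_zero_iff]
    have habs : Tendsto (fun h : ℝ => |(∫ s in Set.Ioc c (c + h), g s) / h - g c|)
        (nhdsWithin 0 (Set.Ioi 0)) (nhds 0) := by
      apply squeeze_zero' (Filter.Eventually.of_forall (fun _ => abs_nonneg _)) _ h2
      filter_upwards [hmem] with h hh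
      have : (∫ s in Set.Ioc c (c + h), g s) = ∫ s in Set.Ioo c (c + h), g s :=
        integral_Ioc_eq_integral_Ioo
      rw [this]
      exact key h hh _ (Set.Ioo_subset_Ioo (by linarith [hh.1]) le_rfl) measurableSet_Ioo
        (by rw [Real.volume_Ioo]; simp [ENNReal.toReal_ofReal (le_of_lt hh.1)])
    exact tendsto_zero_iff_abs_tendsto_zero _ |>.2 habs
  · rw [← tendsto_sub_nhds_zero_iff]
    have habs : Tendsto (fun h : ℝ => |(∫ s in Set.Ioc (c - h) c, g s) / h - g c|)
        (nhdsWithin 0 (Set.Ioi 0)) (nhds 0) := by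
      apply squeeze_zero' (Filter.Eventually.of_forall (fun _ => abs_nonneg _)) _ h2
      filter_upwards [hmem] with h hh
      exact key h hh _ (fun s hs => ⟨hs.1, lt_of_le_of_lt hs.2 (by linarith [hh.1])⟩) measurableSet_Ioc
        (by rw [Real.volume_Ioc]; simp [ENNReal.toReal_ofReal (le_of_lt hh.1)])
    exact tendsto_zero_iff_abs_tendsto_zero _ |>.2 habs

/-- if every switching location `tᵢ` of a `{ν₁,…,ν_M}`-valued step
function `v = v^{t,a}` is a Lebesgue point of `g = ∇F(v) ∈ L²`, then all four Dini
derivatives of `τ ↦ ∫_{tᵢ}^τ g` at `tᵢ` equal `g(tᵢ)`, and SL-stationarity (the sign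
conditions on the one-sided Dini derivatives depending on whether `aᵢ < aᵢ₊₁` or
`aᵢ₊₁ < aᵢ`) is equivalent to `g(tᵢ) = 0` for all `i ∈ {1,…,N−1}`. -/
theorem stmt12 {M : ℕ} (t0 tf : ℝ) (ht : t0 < tf) (ν : Fin M → ℝ)
    (N : ℕ) (hN : 0 < N) (a t : ℕ → ℝ)
    (ha_vals : ∀ i < N, a i ∈ Set.range ν)
    (ha_adj : ∀ i, i + 1 < N → a i ≠ a (i + 1))
    (ht0 : t 0 = t0) (htN : t N = tf) (ht_mono : ∀ i < N, t i < t (i + 1))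
    (g : ℝ → ℝ) (hg : MemLp g 2 (volume.restrict (Set.Ioo t0 tf)))
    (hLeb : ∀ i, 0 < i → i < N →
      Tendsto (fun h : ℝ => (∫ s in Set.Ioo (t i - h) (t i + h), |g s - g (t i)|) / (2 * h))
        (nhdsWithin 0 (Set.Ioi 0)) (nhds 0)) :
    (∀ i, 0 < i → i < N →
      limsup (fun h : ℝ => (∫ s in Set.Ioc (t i) (t i + h), g s) / h)
          (nhdsWithin 0 (Set.Ioi 0)) = g (t i) ∧
      liminf (fun h : ℝ => (∫ s in Set.Ioc (t i) (t i + h), g s) / h)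
          (nhdsWithin 0 (Set.Ioi 0)) = g (t i) ∧
      limsup (fun h : ℝ => (∫ s in Set.Ioc (t i - h) (t i), g s) / h)
          (nhdsWithin 0 (Set.Ioi 0)) = g (t i) ∧
      liminf (fun h : ℝ => (∫ s in Set.Ioc (t i - h) (t i), g s) / h)
          (nhdsWithin 0 (Set.Ioi 0)) = g (t i)) ∧
    ((∀ i, 0 < i → i < N →
        (a (i - 1) < a i →
          0 ≤ limsup (fun h : ℝ => (∫ s in Set.Ioc (t i - h) (t i), g s) / h)
                (nhdsWithin 0 (Set.Ioi 0)) ∧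
          liminf (fun h : ℝ => (∫ s in Set.Ioc (t i) (t i + h), g s) / h)
                (nhdsWithin 0 (Set.Ioi 0)) ≤ 0) ∧
        (a i < a (i - 1) →
          liminf (fun h : ℝ => (∫ s in Set.Ioc (t i - h) (t i), g s) / h)
                (nhdsWithin 0 (Set.Ioi 0)) ≤ 0 ∧
          0 ≤ limsup (fun h : ℝ => (∫ s in Set.Ioc (t i) (t i + h), g s) / h)
                (nhdsWithin 0 (Set.Ioi 0))))
      ↔ (∀ i, 0 < i → i < N → g (t i) = 0)) := by
  haveI : IsFiniteMeasure (volume.restrict (Set.Ioo t0 tf)) :=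
    ⟨by rw [Measure.restrict_apply_univ]; exact measure_Ioo_lt_top⟩
  have hint : IntegrableOn g (Set.Ioo t0 tf) := hg.integrable (by norm_num)
  have tmono : ∀ k ≤ N, ∀ j < k, t j < t k := by
    intro k hk
    induction k with
    | zero => omega
    | succ n ih =>
      intro j hj
      rcases Nat.lt_succ_iff_lt_or_eq.1 hj with h' | h'
      · exact lt_trans (ih (by omega) j h') (ht_mono n (by omega))
      · subst h'; exact ht_mono j (by omega)
  have main : ∀ i, 0 < i → i < N →
      Tendsto (fun h : ℝ => (∫ s in Set.Ioc (t i) (t i + h), g s) / h)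
        (nhdsWithin 0 (Set.Ioi 0)) (nhds (g (t i))) ∧
      Tendsto (fun h : ℝ => (∫ s in Set.Ioc (t i - h) (t i), g s) / h)
        (nhdsWithin 0 (Set.Ioi 0)) (nhds (g (t i))) := by
    intro i hi hiN
    have h1 : t0 < t i := ht0 ▸ tmono i (by omega) 0 hi
    have h2 : t i < tf := htN ▸ tmono N le_rfl i hiN
    set δ := min (t i - t0) (tf - t i) with hδdef
    have hδ : 0 < δ := lt_min (by linarith) (by linarith)
    apply stmt12_aux (t i) g δ hδ _ (hLeb i hi hiN)
    apply hint.mono_set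
    apply Set.Ioo_subset_Ioo
    · have := min_le_left (t i - t0) (tf - t i); linarith
    · have := min_le_right (t i - t0) (tf - t i); linarith
  have quad : ∀ i, 0 < i → i < N →
      limsup (fun h : ℝ => (∫ s in Set.Ioc (t i) (t i + h), g s) / h)
          (nhdsWithin 0 (Set.Ioi 0)) = g (t i) ∧
      liminf (fun h : ℝ => (∫ s in Set.Ioc (t i) (t i + h), g s) / h)
          (nhdsWithin 0 (Set.Ioi 0)) = g (t i) ∧
      limsup (fun h : ℝ => (∫ s in Set.Ioc (t i - h) (t i), g s) / h)
          (nhdsWithin 0 (Set.Ioi 0)) = g (t i) ∧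
      liminf (fun h : ℝ => (∫ s in Set.Ioc (t i - h) (t i), g s) / h)
          (nhdsWithin 0 (Set.Ioi 0)) = g (t i) := by
    intro i hi hiN
    obtain ⟨hr, hl⟩ := main i hi hiN
    exact ⟨hr.limsup_eq, hr.liminf_eq, hl.limsup_eq, hl.liminf_eq⟩
  refine ⟨quad, ?_, ?_⟩
  · intro hSL i hi hiN
    obtain ⟨q1, q2, q3, q4⟩ := quad i hi hiN
    have hne : a (i - 1) ≠ a i := by
      have := ha_adj (i - 1) (by omega)
      rwa [Nat.sub_add_cancel hi] at this
    rcases hne.lt_or_gt with hlt | hlt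
    · obtain ⟨hA, hB⟩ := (hSL i hi hiN).1 hlt
      rw [q3] at hA; rw [q2] at hB
      linarith
    · obtain ⟨hA, hB⟩ := (hSL i hi hiN).2 hlt
      rw [q4] at hA; rw [q1] at hB
      linarith
  · intro hz i hi hiN
    obtain ⟨q1, q2, q3, q4⟩ := quad i hi hiN
    have h0 := hz i hi hiN
    rw [h0] at q1 q2 q3 q4
    exact ⟨fun _ => ⟨le_of_eq q3.symm, le_of_eq q2⟩, fun _ => ⟨le_of_eq q4, le_of_eq q1.symm⟩⟩
end

section
/- Let Ω = [0,T) with uniform partition into N intervals of length h = T/N, and let the feasible sets be: (TR-var) all {ν₁,…,ν_M}-valued v ∈ BV([0,T)) with ‖v − ṽ‖_{L¹} ≤ Δ, and (TRIP-var) those additionally piecewise constant on the uniform partition. Suppose the minimizer v of (TR-var) is a step function v = Σ_{i=1}^{n} aᵢ χ_{[s_{i−1},sᵢ)} with 0 = s₀ < … < s_n = T, ṽ is piecewise constant on a coarser dyadic uniform partition, and N is large enough that each interval (s_{i−1}, sᵢ) contains a grid point. Then there exists a feasible piecewise-constant v^h for (TRIP-var) with TV(v^h) ≤ TV(v) and |∫₀^T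 g̃(s) v^h(s) ds − ∫₀^T g̃(s) v(s) ds| ≤ 2h‖g̃‖_{L^∞} Σ_{i=1}^n |aᵢ|, so the optimal value of (TRIP-var) exceeds that of (TR-var) by at most 2h‖g̃‖_{L^∞} Σ_{i=1}^n |aᵢ|. -/
open MeasureTheory ENNReal

lemma mono_le {n : ℕ} {t : ℕ → ℝ} (h : ∀ i < n, t i ≤ t (i+1)) :
    ∀ i j, i ≤ j → j ≤ n → t i ≤ t j := by
  intro i j hij hjn
  induction j with
  | zero => simp_all
  | succ k ih =>
    rcases Nat.lt_or_ge i (k+1) with hl | hg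
    · exact le_trans (ih (by omega) (by omega)) (h k (by omega))
    · have : i = k + 1 := by omega
      simp [this]

lemma stepFn_apply {n : ℕ} {t : ℕ → ℝ} {a : ℕ → ℝ} (h : ∀ i < n, t i ≤ t (i+1))
    {i : ℕ} (hi : i < n) {x : ℝ} (hx1 : t i ≤ x) (hx2 : x < t (i+1)) :
    stepFn n t a x = a i := by
  unfold stepFn
  rw [Finset.sum_eq_single i]
  · exact Set.indicator_of_mem (Set.mem_Ico.2 ⟨hx1, hx2⟩) _
  · intro j hj hne
    apply Set.indicator_of_notMem
    rintro ⟨h1, h2⟩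
    rcases lt_or_gt_of_ne hne with hlt | hgt
    · exact absurd (lt_of_lt_of_le h2 (mono_le h (j+1) i hlt (le_of_lt hi))) (not_lt.2 hx1)
    · exact absurd (lt_of_lt_of_le hx2 (mono_le h (i+1) j hgt (le_of_lt (Finset.mem_range.1 hj))))
        (not_lt.2 h1)
  · intro hnot; exact absurd (Finset.mem_range.2 hi) hnot

lemma stepFn_apply_findGreatest {n : ℕ} (hn : 0 < n) {T : ℝ} {t a : ℕ → ℝ}
    (h : ∀ i < n, t i ≤ t (i+1)) (ht0 : t 0 = 0) (htn : t n = T)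
    {x : ℝ} (hx0 : 0 ≤ x) (hxT : x < T) :
    stepFn n t a x = a (Nat.findGreatest (fun i => t i ≤ x) (n-1)) := by
  classical
  set k := Nat.findGreatest (fun i => t i ≤ x) (n-1) with hk
  have hk_le : k ≤ n - 1 := Nat.findGreatest_le _
  have hP : t k ≤ x := by
    have h0 : t 0 ≤ x := by rw [ht0]; exact hx0
    exact hk ▸ Nat.findGreatest_spec (P := fun i => t i ≤ x) (Nat.zero_le _) h0
  have hx2 : x < t (k + 1) := by
    rcases Nat.lt_or_ge k (n-1) with hl | hg
    · by_contra hc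
      have hP1 : t (k+1) ≤ x := not_lt.1 hc
      have h2 := Nat.le_findGreatest (P := fun i => t i ≤ x) (show k+1 ≤ n-1 by omega) hP1
      rw [← hk] at h2
      omega
    · have : k = n - 1 := by omega
      have : k + 1 = n := by omega
      rw [this, htn]; exact hxT
  exact stepFn_apply h (by omega) hP hx2

lemma findGreatest_congr {P Q : ℕ → Prop} [DecidablePred P] [DecidablePred Q] :
    ∀ b : ℕ, (∀ i ≤ b, (P i ↔ Q i)) → Nat.findGreatest P b = Nat.findGreatest Q b
  | 0, _ => rfl
  | b+1, h => by
      rw [Nat.findGreatest_succ, Nat.findGreatest_succ]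
      have hb := h (b+1) le_rfl
      by_cases hq : Q (b+1)
      · rw [if_pos (hb.2 hq), if_pos hq]
      · rw [if_neg (fun hp => hq (hb.1 hp)), if_neg hq]
        exact findGreatest_congr b (fun i hi => h i (by omega))

lemma stepFn_measurable (n : ℕ) (t a : ℕ → ℝ) : Measurable (stepFn n t a) := by
  apply Finset.measurable_sum
  intro i _
  exact (measurable_const).indicator measurableSet_Ico

lemma abs_stepFn_le (n : ℕ) (t a : ℕ → ℝ) (x : ℝ) :
    |stepFn n t a x| ≤ ∑ i ∈ Finset.range n, |a i| := by
  refine le_trans (Finset.abs_sum_le_sum_abs _ _) (Finset.sum_le_sum ?_)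
  intro i _
  by_cases hx : x ∈ Set.Ico (t i) (t (i+1))
  · rw [Set.indicator_of_mem hx]
  · rw [Set.indicator_of_notMem hx]; simp

lemma stepFn_integrableOn {n : ℕ} {t a : ℕ → ℝ} {T : ℝ} :
    IntegrableOn (stepFn n t a) (Set.Ioo 0 T) := by
  refine Integrable.mono' (g := fun _ => ∑ i ∈ Finset.range n, |a i|)
    (integrableOn_const measure_Ioo_lt_top.ne)
    (stepFn_measurable n t a).aestronglyMeasurable ?_
  exact Filter.Eventually.of_forall (fun x => by
    rw [Real.norm_eq_abs]; exact abs_stepFn_le n t a x)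
-- the grid representation lemma
lemma stepFn_grid_eq {n N : ℕ} (hn : 0 < n) {T h : ℝ} (hh : 0 < h) (hTN : T = (N:ℝ) * h)
    {a : ℕ → ℝ} {κ : ℕ → ℕ} (hmono : ∀ i < n, κ i ≤ κ (i+1)) (hκ0 : κ 0 = 0) (hκn : κ n = N)
    {x : ℝ} (hx : 0 ≤ x) (hxT : x < T) :
    stepFn N (fun j => (j:ℝ) * h)
        (fun j => a (Nat.findGreatest (fun i => κ i ≤ j) (n-1))) x
      = stepFn n (fun i => (κ i : ℝ) * h) a x := by
  classical
  have hgridmono : ∀ i < N, (i:ℝ) * h ≤ ((i+1:ℕ):ℝ) * h := by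
    intro i _
    have : (i:ℝ) ≤ ((i+1:ℕ):ℝ) := by push_cast; linarith
    nlinarith
  set j := ⌊x / h⌋₊ with hj
  have hjx : (j:ℝ) * h ≤ x := by
    have := Nat.floor_le (show 0 ≤ x / h from div_nonneg hx hh.le)
    rw [← hj] at this
    calc (j:ℝ) * h ≤ (x/h) * h := by nlinarith
    _ = x := by field_simp
  have hxj : x < ((j+1:ℕ):ℝ) * h := by
    have := Nat.lt_floor_add_one (x / h)
    rw [← hj] at this
    push_cast
    calc x = (x/h) * h := by field_simp
    _ < ((j:ℝ)+1) * h := by nlinarith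
  have hjN : j < N := by
    have : (j:ℝ) * h < (N:ℝ) * h := lt_of_le_of_lt hjx (hTN ▸ hxT)
    by_contra hc
    have : (N:ℝ) ≤ (j:ℝ) := by exact_mod_cast not_lt.1 hc
    nlinarith
  have hL : stepFn N (fun j => (j:ℝ) * h)
      (fun j => a (Nat.findGreatest (fun i => κ i ≤ j) (n-1))) x
      = a (Nat.findGreatest (fun i => κ i ≤ j) (n-1)) := by
    exact stepFn_apply (t := fun j => (j:ℝ)*h) hgridmono hjN hjx hxj
  have htmono : ∀ i < n, (κ i : ℝ) * h ≤ (κ (i+1) : ℝ) * h := by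
    intro i hi
    have : (κ i : ℝ) ≤ (κ (i+1) : ℝ) := by exact_mod_cast hmono i hi
    nlinarith
  have hR : stepFn n (fun i => (κ i : ℝ) * h) a x
      = a (Nat.findGreatest (fun i => (κ i : ℝ) * h ≤ x) (n-1)) := by
    exact stepFn_apply_findGreatest hn htmono (by simp [hκ0]) (by rw [hκn]; exact hTN.symm) hx hxT
  rw [hL, hR]
  congr 1
  apply findGreatest_congr
  intro i _
  constructor
  · intro hκj
    have : (κ i : ℝ) ≤ (j:ℝ) := by exact_mod_cast hκj
    calc (κ i : ℝ) * h ≤ (j:ℝ) * h := by nlinarith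
    _ ≤ x := hjx
  · intro hκx
    have h1 : (κ i : ℝ) * h < ((j+1:ℕ):ℝ) * h := lt_of_le_of_lt hκx hxj
    have : (κ i : ℝ) < ((j+1:ℕ):ℝ) := by nlinarith [(Nat.cast_nonneg (κ i) : (0:ℝ) ≤ κ i)]
    have : κ i < j + 1 := by exact_mod_cast this
    omega

-- upper bound on variation of a step function
lemma eVariationOn_stepFn_le {n : ℕ} (hn : 0 < n) {T : ℝ} {t a : ℕ → ℝ}
    (hmono : ∀ i < n, t i ≤ t (i+1)) (ht0 : t 0 = 0) (htn : t n = T) :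
    eVariationOn (stepFn n t a) (Set.Ioo 0 T) ≤
      ∑ i ∈ Finset.range (n-1), edist (a (i+1)) (a i) := by
  classical
  apply iSup_le
  rintro ⟨m, u, hu, us⟩
  simp only
  set c : ℕ → ℕ := fun k => Nat.findGreatest (fun i => t i ≤ u k) (n-1) with hc
  have hcle : ∀ k, c k ≤ n - 1 := fun k => Nat.findGreatest_le _
  have hcmono : Monotone c := by
    intro k l hkl
    exact Nat.findGreatest_mono (fun i hi => le_trans hi (hu hkl)) le_rfl
  have hval : ∀ k, stepFn n t a (u k) = a (c k) := by
    intro k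
    exact stepFn_apply_findGreatest hn hmono ht0 htn (us k).1.le (us k).2
  have key : ∀ m : ℕ, ∑ k ∈ Finset.range m, edist (stepFn n t a (u (k+1))) (stepFn n t a (u k))
      ≤ ∑ i ∈ Finset.Ico (c 0) (c m), edist (a (i+1)) (a i) := by
    intro m
    induction m with
    | zero => simp
    | succ m ih =>
      rw [Finset.sum_range_succ]
      have step : edist (stepFn n t a (u (m+1))) (stepFn n t a (u m))
          ≤ ∑ i ∈ Finset.Ico (c m) (c (m+1)), edist (a (i+1)) (a i) := by
        rw [hval, hval, edist_comm]
        calc edist (a (c m)) (a (c (m+1)))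
            ≤ ∑ i ∈ Finset.Ico (c m) (c (m+1)), edist (a i) (a (i+1)) :=
              edist_le_Ico_sum_edist a (hcmono (Nat.le_succ m))
        _ = ∑ i ∈ Finset.Ico (c m) (c (m+1)), edist (a (i+1)) (a i) := by
              exact Finset.sum_congr rfl (fun i _ => edist_comm _ _)
      calc _ ≤ (∑ i ∈ Finset.Ico (c 0) (c m), edist (a (i+1)) (a i))
            + ∑ i ∈ Finset.Ico (c m) (c (m+1)), edist (a (i+1)) (a i) := add_le_add ih step
      _ = _ := Finset.sum_Ico_consecutive _ (hcmono (Nat.zero_le m)) (hcmono (Nat.le_succ m))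
  calc ∑ k ∈ Finset.range m, edist (stepFn n t a (u (k+1))) (stepFn n t a (u k))
      ≤ ∑ i ∈ Finset.Ico (c 0) (c m), edist (a (i+1)) (a i) := key m
  _ ≤ ∑ i ∈ Finset.range (n-1), edist (a (i+1)) (a i) := by
      apply Finset.sum_le_sum_of_subset
      intro i hi
      rw [Finset.mem_Ico] at hi
      rw [Finset.mem_range]
      exact lt_of_lt_of_le hi.2 (hcle m)

lemma TV1_le {T : ℝ} {f u : ℝ → ℝ} (hae : ∀ x ∈ Set.Ioo (0:ℝ) T, u x = f x) :
    TV1 0 T f ≤ eVariationOn u (Set.Ioo 0 T) := by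
  refine iInf_le_of_le u (iInf_le_of_le ?_ le_rfl)
  exact Filter.eventually_of_mem (ae_restrict_mem measurableSet_Ioo) hae

lemma le_TV1_stepFn {n : ℕ} (hn : 0 < n) {T : ℝ} {s a : ℕ → ℝ}
    (hs0 : s 0 = 0) (hsn : s n = T) (hs : ∀ i < n, s i < s (i+1)) :
    ∑ i ∈ Finset.range (n-1), edist (a (i+1)) (a i) ≤ TV1 0 T (stepFn n s a) := by
  classical
  apply le_iInf
  intro u
  apply le_iInf
  intro hu
  have hmono : ∀ i < n, s i ≤ s (i+1) := fun i hi => (hs i hi).le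
  -- the bad set is null
  have hnull : volume ({x | u x ≠ stepFn n s a x} ∩ Set.Ioo 0 T) = 0 := by
    have := hu
    rw [Filter.EventuallyEq, ae_iff] at this
    rwa [Measure.restrict_apply' measurableSet_Ioo] at this
  -- choose points
  have hex : ∀ i, ∃ y, i < n → (y ∈ Set.Ioo (s i) (s (i+1)) ∧ u y = stepFn n s a y) := by
    intro i
    by_cases hi : i < n
    · have hsub : Set.Ioo (s i) (s (i+1)) ⊆ Set.Ioo 0 T := by
        intro y hy
        constructor
        · calc (0:ℝ) = s 0 := hs0.symm
          _ ≤ s i := mono_le hmono 0 i (Nat.zero_le _) hi.le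
          _ < y := hy.1
        · calc y < s (i+1) := hy.2
          _ ≤ s n := mono_le hmono (i+1) n hi (le_refl n)
          _ = T := hsn
      have hpos : 0 < volume (Set.Ioo (s i) (s (i+1))) := by
        rw [Real.volume_Ioo]
        simp only [ENNReal.ofReal_pos, sub_pos]
        exact hs i hi
      have : (Set.Ioo (s i) (s (i+1)) \ {x | u x ≠ stepFn n s a x}).Nonempty := by
        by_contra hc
        rw [Set.not_nonempty_iff_eq_empty, Set.diff_eq_empty] at hc
        have hle : volume (Set.Ioo (s i) (s (i+1))) ≤
            volume ({x | u x ≠ stepFn n s a x} ∩ Set.Ioo 0 T) :=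
          measure_mono (fun y hy => ⟨hc hy, hsub hy⟩)
        rw [hnull] at hle
        exact hpos.ne' (le_antisymm hle zero_le')
      obtain ⟨y, hy⟩ := this
      have hy2 : u y = stepFn n s a y := not_not.1 hy.2
      exact ⟨y, fun _ => ⟨hy.1, hy2⟩⟩
    · exact ⟨0, fun h => absurd h hi⟩
  choose x hx using hex
  have hxmono : ∀ i j, i ≤ j → j < n → x i ≤ x j := by
    intro i j hij hjn
    induction j with
    | zero => have : i = 0 := by omega
              simp [this]
    | succ k ih =>
      rcases Nat.lt_or_ge i (k+1) with hl | hg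
      · have h1 : x i ≤ x k := ih (by omega) (by omega)
        have h2 : x k < s (k+1) := ((hx k (by omega)).1).2
        have h3 : s (k+1) < x (k+1) := ((hx (k+1) hjn).1).1
        linarith
      · have : i = k+1 := by omega
        simp [this]
  set y : ℕ → ℝ := fun k => x (min k (n-1)) with hy
  have hymono : Monotone y := by
    intro k l hkl
    exact hxmono _ _ (min_le_min_right _ hkl) (by omega)
  have hymem : ∀ k, y k ∈ Set.Ioo (0:ℝ) T := by
    intro k
    have hlt : min k (n-1) < n := by omega
    have := (hx (min k (n-1)) hlt).1
    constructor
    · calc (0:ℝ) = s 0 := hs0.symm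
      _ ≤ s (min k (n-1)) := mono_le hmono 0 _ (Nat.zero_le _) hlt.le
      _ < y k := this.1
    · calc y k < s (min k (n-1) + 1) := this.2
      _ ≤ s n := mono_le hmono _ n hlt (le_refl n)
      _ = T := hsn
  have hsum := eVariationOn.sum_le (f := u) (n := n-1) hymono hymem
  refine le_trans (le_of_eq ?_) hsum
  apply Finset.sum_congr rfl
  intro k hk
  rw [Finset.mem_range] at hk
  have hk1 : min k (n-1) = k := by omega
  have hk2 : min (k+1) (n-1) = k+1 := by omega
  have e1 : u (y k) = a k := by
    rw [hy]; simp only [hk1]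
    rw [(hx k (by omega)).2]
    exact stepFn_apply hmono (by omega) ((hx k (by omega)).1).1.le ((hx k (by omega)).1).2
  have e2 : u (y (k+1)) = a (k+1) := by
    rw [hy]; simp only [hk2]
    rw [(hx (k+1) (by omega)).2]
    exact stepFn_apply hmono (by omega) ((hx (k+1) (by omega)).1).1.le ((hx (k+1) (by omega)).1).2
  rw [e1, e2]
lemma ennreal_coe_toReal_eq {x : ℝ≥0∞} (hx : x ≠ ⊤) : (x : EReal) = ((x.toReal : ℝ) : EReal) := by
  conv_lhs => rw [← ENNReal.ofReal_toReal hx]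
  rw [EReal.coe_ennreal_ofReal, max_eq_left ENNReal.toReal_nonneg]


set_option maxHeartbeats 2000000 in
/-- approximation of the trust-region subproblem on a uniform grid.
If the minimizer `v = Σᵢ aᵢ χ_{[s_{i−1},s_i)}` of the continuous trust-region problem
(TR-var) has each interval `(s_{i−1}, s_i)` containing a grid point of the uniform
partition of `[0,T)` into `N` cells of width `h = T/N`, and `ṽ` is piecewise constant
on a coarser dyadic partition into `2^{k₀}` cells (with `2^{k₀} ∣ N`), then there is a
feasible grid-piecewise-constant `v^h` with `TV(v^h) ≤ TV(v)`,
`|∫ g̃ v^h − ∫ g̃ v| ≤ 2h‖g̃‖_∞ Σᵢ|aᵢ|`, so the optimal value of (TRIP-var) exceeds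
that of (TR-var) by at most `2h‖g̃‖_∞ Σᵢ|aᵢ|`. -/
theorem stmt14 {M : ℕ} (T : ℝ) (hT : 0 < T) (ν : Fin M → ℤ)
    (α Δ Cg : ℝ) (hα : 0 < α) (hΔ : 0 < Δ) (hCg : 0 ≤ Cg)
    (g : ℝ → ℝ) (hg_meas : AEStronglyMeasurable g (volume.restrict (Set.Ioo 0 T)))
    (hg_bdd : ∀ᵐ x ∂(volume.restrict (Set.Ioo 0 T)), |g x| ≤ Cg)
    (N : ℕ) (hN : 0 < N) (hstep : ℝ) (hstep_def : hstep = T / N)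
    (k0 : ℕ) (hdiv : 2 ^ k0 ∣ N)
    (vt : ℝ → ℝ)
    (hvt_vals : ∀ᵐ x ∂(volume.restrict (Set.Ioo 0 T)),
      vt x ∈ Set.range (fun i => ((ν i : ℝ))))
    (hvt_pc : ∀ j < 2 ^ k0, ∀ x ∈ Set.Ico ((j : ℝ) * T / 2 ^ k0) ((j + 1 : ℝ) * T / 2 ^ k0),
      ∀ y ∈ Set.Ico ((j : ℝ) * T / 2 ^ k0) ((j + 1 : ℝ) * T / 2 ^ k0), vt x = vt y)
    (n : ℕ) (hn : 0 < n) (s a : ℕ → ℝ)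
    (hs0 : s 0 = 0) (hsn : s n = T) (hs_mono : ∀ i < n, s i < s (i + 1))
    (ha_vals : ∀ i < n, a i ∈ Set.range (fun i => ((ν i : ℝ))))
    (ha_adj : ∀ i, i + 1 < n → a i ≠ a (i + 1))
    (hgrid : ∀ i < n, ∃ j : ℕ, j ≤ N ∧ s i < (j : ℝ) * hstep ∧ (j : ℝ) * hstep < s (i + 1))
    (hfeas : (∫ x in Set.Ioo 0 T, |stepFn n s a x - vt x|) ≤ Δ)
    (hmin : ∀ w : ℝ → ℝ, AEStronglyMeasurable w (volume.restrict (Set.Ioo 0 T)) →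
      (∀ᵐ x ∂(volume.restrict (Set.Ioo 0 T)), w x ∈ Set.range (fun i => ((ν i : ℝ)))) →
      (∫ x in Set.Ioo 0 T, |w x - vt x|) ≤ Δ →
      ((∫ x in Set.Ioo 0 T, g x * stepFn n s a x : ℝ) : EReal)
          + (α : EReal) * (TV1 0 T (stepFn n s a) : EReal)
        ≤ ((∫ x in Set.Ioo 0 T, g x * w x : ℝ) : EReal)
          + (α : EReal) * (TV1 0 T w : EReal)) :
    ∃ b : ℕ → ℝ, (∀ j < N, b j ∈ Set.range (fun i => ((ν i : ℝ)))) ∧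
      (∫ x in Set.Ioo 0 T, |stepFn N (fun j => (j : ℝ) * hstep) b x - vt x|) ≤ Δ ∧
      TV1 0 T (stepFn N (fun j => (j : ℝ) * hstep) b) ≤ TV1 0 T (stepFn n s a) ∧
      |(∫ x in Set.Ioo 0 T, g x * stepFn N (fun j => (j : ℝ) * hstep) b x)
          - (∫ x in Set.Ioo 0 T, g x * stepFn n s a x)|
        ≤ 2 * hstep * Cg * ∑ i ∈ Finset.range n, |a i| ∧
      ((∫ x in Set.Ioo 0 T, g x * stepFn N (fun j => (j : ℝ) * hstep) b x : ℝ) : EReal)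
          + (α : EReal) * (TV1 0 T (stepFn N (fun j => (j : ℝ) * hstep) b) : EReal)
        ≤ ((∫ x in Set.Ioo 0 T, g x * stepFn n s a x : ℝ) : EReal)
          + (α : EReal) * (TV1 0 T (stepFn n s a) : EReal)
          + ((2 * hstep * Cg * ∑ i ∈ Finset.range n, |a i| : ℝ) : EReal) := by
  classical
  have hNpos : (0:ℝ) < N := by exact_mod_cast hN
  have hhpos : 0 < hstep := by rw [hstep_def]; positivity
  have hTN : T = (N:ℝ) * hstep := by rw [hstep_def]; field_simp
  have hs_mono' : ∀ i < n, s i ≤ s (i+1) := fun i hi => (hs_mono i hi).le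
  have hs_le : ∀ i j, i ≤ j → j ≤ n → s i ≤ s j := mono_le hs_mono'
  -- grid points strictly inside each interval
  have hgrid' : ∀ i, ∃ j : ℕ, i < n →
      (j ≤ N ∧ s i < (j:ℝ) * hstep ∧ (j:ℝ) * hstep < s (i+1)) := by
    intro i
    by_cases hi : i < n
    · obtain ⟨j, hj⟩ := hgrid i hi; exact ⟨j, fun _ => hj⟩
    · exact ⟨0, fun h => absurd h hi⟩
  choose mj hmj using hgrid'
  -- floor indices
  set d : ℕ → ℕ := fun i => ⌊s i / hstep⌋₊ with hd
  have hs_nonneg : ∀ i ≤ n, 0 ≤ s i := by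
    intro i hi; rw [← hs0]; exact hs_le 0 i (Nat.zero_le _) hi
  have hdle : ∀ i ≤ n, (d i : ℝ) * hstep ≤ s i := by
    intro i hi
    have h1 : (d i : ℝ) ≤ s i / hstep :=
      Nat.floor_le (div_nonneg (hs_nonneg i hi) hhpos.le)
    calc (d i : ℝ) * hstep ≤ (s i / hstep) * hstep := by nlinarith
    _ = s i := by field_simp
  have hdlt : ∀ i ≤ n, s i < ((d i : ℝ) + 1) * hstep := by
    intro i hi
    have h1 : s i / hstep < (d i : ℝ) + 1 := Nat.lt_floor_add_one _
    calc s i = (s i / hstep) * hstep := by field_simp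
    _ < ((d i : ℝ) + 1) * hstep := by nlinarith
  -- relations between floors and grid points
  have hmj_d : ∀ k i, k < n → k < i → i ≤ n → mj k ≤ d i := by
    intro k i hk hki hin
    have h1 : (mj k : ℝ) * hstep < s i :=
      lt_of_lt_of_le (hmj k hk).2.2 (hs_le (k+1) i hki hin)
    have h2 : (mj k : ℝ) ≤ s i / hstep := by
      rw [le_div_iff₀ hhpos]; exact h1.le
    exact Nat.le_floor h2
  have hd_lt_mj : ∀ i, 0 < i → i < n → d i < mj i := by
    intro i h0 hi
    have h1 : (d i : ℝ) * hstep < (mj i : ℝ) * hstep :=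
      lt_of_le_of_lt (hdle i hi.le) (hmj i hi).2.1
    have : (d i : ℝ) < (mj i : ℝ) := by nlinarith
    exact_mod_cast this
  -- the rounding choice
  set κ : ℕ → ℕ := fun i =>
    if i = 0 then 0 else if n ≤ i then N
    else if |a i - vt ((d i : ℝ) * hstep)| ≤ |a (i-1) - vt ((d i : ℝ) * hstep)|
      then d i else d i + 1
    with hκ
  have hκ0 : κ 0 = 0 := by simp [hκ]
  have hκn : κ n = N := by simp [hκ, hn, Nat.pos_iff_ne_zero.1 hn]
  have hκ_cases : ∀ i, 0 < i → i < n →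
      (κ i = d i ∧ |a i - vt ((d i : ℝ) * hstep)| ≤ |a (i-1) - vt ((d i : ℝ) * hstep)|) ∨
      (κ i = d i + 1 ∧ |a (i-1) - vt ((d i : ℝ) * hstep)| ≤ |a i - vt ((d i : ℝ) * hstep)|) := by
    intro i h0 hi
    simp only [hκ]
    rw [if_neg (by omega), if_neg (by omega)]
    by_cases hc : |a i - vt ((d i : ℝ) * hstep)| ≤ |a (i-1) - vt ((d i : ℝ) * hstep)|
    · left; rw [if_pos hc]; exact ⟨rfl, hc⟩
    · right; rw [if_neg hc]; exact ⟨rfl, (not_le.1 hc).le⟩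
  have hκ_ge : ∀ i, 0 < i → i < n → d i ≤ κ i := by
    intro i h0 hi; rcases hκ_cases i h0 hi with ⟨h,-⟩ | ⟨h,-⟩ <;> omega
  have hκ_le : ∀ i, 0 < i → i < n → κ i ≤ d i + 1 := by
    intro i h0 hi; rcases hκ_cases i h0 hi with ⟨h,-⟩ | ⟨h,-⟩ <;> omega
  have hκ_le_mj : ∀ k < n, κ k ≤ mj k := by
    intro k hk
    rcases Nat.eq_zero_or_pos k with rfl | h0
    · rw [hκ0]; exact Nat.zero_le _
    · exact le_trans (hκ_le k h0 hk) (hd_lt_mj k h0 hk)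
  have hκ_ge_mj : ∀ k < n, mj k ≤ κ (k+1) := by
    intro k hk
    rcases Nat.lt_or_ge (k+1) n with hl | hg
    · exact le_trans (hmj_d k (k+1) hk (by omega) hl.le) (hκ_ge (k+1) (by omega) hl)
    · have hkn : k + 1 = n := by omega
      rw [hkn, hκn]; exact (hmj k hk).1
  have hκmono : ∀ i < n, κ i ≤ κ (i+1) := by
    intro i hi
    rcases Nat.eq_zero_or_pos i with rfl | h0
    · rw [hκ0]; exact Nat.zero_le _
    · exact le_trans (hκ_le_mj i hi) (hκ_ge_mj i hi)
  set t : ℕ → ℝ := fun i => (κ i : ℝ) * hstep with htdef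
  have ht0 : t 0 = 0 := by simp [htdef, hκ0]
  have htn : t n = T := by rw [htdef]; simp only [hκn]; exact hTN.symm
  have htmono : ∀ i < n, t i ≤ t (i+1) := by
    intro i hi
    have : (κ i : ℝ) ≤ (κ (i+1) : ℝ) := by exact_mod_cast hκmono i hi
    simp only [htdef]; nlinarith
  have ht_le : ∀ i j, i ≤ j → j ≤ n → t i ≤ t j := mono_le htmono
  -- vt is constant on grid cells
  have hvt_cell : ∀ j < N, ∀ x, (j:ℝ) * hstep ≤ x → x < ((j:ℝ)+1) * hstep →
      vt x = vt ((j:ℝ) * hstep) := by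
    intro j hj x hx1 hx2
    obtain ⟨m0, hm0⟩ := hdiv
    have hm0pos : 0 < m0 := by
      rcases Nat.eq_zero_or_pos m0 with rfl | h; · omega
      · exact ‹_›
    set q := j / m0 with hq
    have hq2 : q < 2 ^ k0 := by
      rw [hq, Nat.div_lt_iff_lt_mul hm0pos]; omega
    have hqm1 : q * m0 ≤ j := by
      rw [hq]; exact Nat.div_mul_le_self j m0
    have hqm2 : j + 1 ≤ (q + 1) * m0 := by
      have := Nat.div_add_mod j m0
      have := Nat.mod_lt j hm0pos
      rw [hq]; nlinarith [Nat.div_add_mod j m0, Nat.mod_lt j hm0pos]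
    have hm0h : (m0 : ℝ) * hstep = T / 2 ^ k0 := by
      have : ((2:ℝ) ^ k0) * m0 * hstep = T := by
        rw [hTN, hm0]; push_cast; ring
      have h2 : (0:ℝ) < 2 ^ k0 := by positivity
      field_simp
      nlinarith
    have hmemx : x ∈ Set.Ico ((q : ℝ) * T / 2 ^ k0) ((q + 1 : ℝ) * T / 2 ^ k0) := by
      constructor
      · have : (q:ℝ) * T / 2 ^ k0 = (q:ℝ) * ((m0:ℝ) * hstep) := by
          rw [hm0h]; ring
        rw [this]
        have h1 : ((q * m0 : ℕ) : ℝ) ≤ (j : ℝ) := by exact_mod_cast hqm1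
        push_cast at h1
        nlinarith
      · have : ((q:ℝ) + 1) * T / 2 ^ k0 = ((q:ℝ) + 1) * ((m0:ℝ) * hstep) := by
          rw [hm0h]; ring
        rw [this]
        have h1 : ((j + 1 : ℕ) : ℝ) ≤ (((q+1) * m0 : ℕ) : ℝ) := by exact_mod_cast hqm2
        push_cast at h1
        nlinarith
    have hmemj : (j:ℝ) * hstep ∈ Set.Ico ((q : ℝ) * T / 2 ^ k0) ((q + 1 : ℝ) * T / 2 ^ k0) := by
      constructor
      · have : (q:ℝ) * T / 2 ^ k0 = (q:ℝ) * ((m0:ℝ) * hstep) := by rw [hm0h]; ring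
        rw [this]
        have h1 : ((q * m0 : ℕ) : ℝ) ≤ (j : ℝ) := by exact_mod_cast hqm1
        push_cast at h1
        nlinarith
      · have : ((q:ℝ) + 1) * T / 2 ^ k0 = ((q:ℝ) + 1) * ((m0:ℝ) * hstep) := by rw [hm0h]; ring
        rw [this]
        have h1 : ((j + 1 : ℕ) : ℝ) ≤ (((q+1) * m0 : ℕ) : ℝ) := by exact_mod_cast hqm2
        push_cast at h1
        nlinarith
    have hq2' : (q:ℝ) < 2 ^ k0 := by exact_mod_cast hq2
    exact hvt_pc (q:ℝ) hq2' x hmemx ((j:ℝ) * hstep) hmemj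
  have hsiT : ∀ i < n, s i < T := by
    intro i hi
    calc s i < s (i+1) := hs_mono i hi
    _ ≤ s n := hs_le (i+1) n hi le_rfl
    _ = T := hsn
  have hspos : ∀ i, 0 < i → i ≤ n → 0 < s i := by
    intro i h0 hi
    calc (0:ℝ) = s 0 := hs0.symm
    _ < s 1 := hs_mono 0 hn
    _ ≤ s i := hs_le 1 i h0 hi
  have hdN : ∀ i < n, d i < N := by
    intro i hi
    have h1 : (d i : ℝ) * hstep ≤ s i := hdle i hi.le
    have h2 : s i < T := hsiT i hi
    have h3 : (d i : ℝ) * hstep < (N:ℝ) * hstep := by rw [← hTN]; linarith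
    have : (d i : ℝ) < (N : ℝ) := by nlinarith
    exact_mod_cast this
  -- the grid coefficients
  set b : ℕ → ℝ := fun j => a (Nat.findGreatest (fun i => κ i ≤ j) (n-1)) with hbdef
  have hWw : ∀ x, 0 ≤ x → x < T →
      stepFn N (fun j => (j : ℝ) * hstep) b x = stepFn n t a x := by
    intro x h1 h2
    exact stepFn_grid_eq hn hhpos hTN hκmono hκ0 hκn h1 h2
  -- classification of points
  have key1 : ∀ x, 0 < x → x < T →
      stepFn n t a x = stepFn n s a x ∨
      ∃ i, 0 < i ∧ i < n ∧ min (s i) (t i) ≤ x ∧ x < max (s i) (t i) := by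
    intro x hx0 hxT
    set I := Nat.findGreatest (fun i => s i ≤ x) (n-1) with hI
    set J := Nat.findGreatest (fun i => t i ≤ x) (n-1) with hJ
    have hVx : stepFn n s a x = a I := stepFn_apply_findGreatest hn hs_mono' hs0 hsn hx0.le hxT
    have hwx : stepFn n t a x = a J := stepFn_apply_findGreatest hn htmono ht0 htn hx0.le hxT
    have hIle : I ≤ n - 1 := Nat.findGreatest_le _
    have hJle : J ≤ n - 1 := Nat.findGreatest_le _
    have hsI : s I ≤ x := Nat.findGreatest_spec (P := fun i => s i ≤ x)
      (Nat.zero_le _) (show s 0 ≤ x by rw [hs0]; exact hx0.le)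
    have htJ : t J ≤ x := Nat.findGreatest_spec (P := fun i => t i ≤ x)
      (Nat.zero_le _) (show t 0 ≤ x by rw [ht0]; exact hx0.le)
    rcases Nat.lt_trichotomy I J with hIJ | hIJ | hIJ
    · right
      refine ⟨I+1, by omega, by omega, ?_, ?_⟩
      · have h1 : t (I+1) ≤ t J := ht_le (I+1) J hIJ (by omega)
        exact le_trans (min_le_right _ _) (le_trans h1 htJ)
      · have hxs : x < s (I+1) := by
          by_contra hc
          have h2 := Nat.le_findGreatest (P := fun i => s i ≤ x)
            (show I+1 ≤ n-1 by omega) (not_lt.1 hc)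
          rw [← hI] at h2; omega
        exact lt_of_lt_of_le hxs (le_max_left _ _)
    · left; rw [hVx, hwx, hIJ]
    · right
      refine ⟨J+1, by omega, by omega, ?_, ?_⟩
      · have h1 : s (J+1) ≤ s I := hs_le (J+1) I hIJ (by omega)
        exact le_trans (min_le_left _ _) (le_trans h1 hsI)
      · have hxt : x < t (J+1) := by
          by_contra hc
          have h2 := Nat.le_findGreatest (P := fun i => t i ≤ x)
            (show J+1 ≤ n-1 by omega) (not_lt.1 hc)
          rw [← hJ] at h2; omega
        exact lt_of_lt_of_le hxt (le_max_right _ _)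
  -- values on the exchanged regions
  have key2 : ∀ i, 0 < i → i < n → ∀ x, min (s i) (t i) ≤ x → x < max (s i) (t i) →
      (|stepFn n t a x - vt x| ≤ |stepFn n s a x - vt x| ∧
       |stepFn n t a x - stepFn n s a x| ≤ |a i| + |a (i-1)|) := by
    intro i h0 hi x hx1 hx2
    obtain ⟨k, rfl⟩ : ∃ k, i = k + 1 := ⟨i - 1, by omega⟩
    have hcell1 : (d (k+1) : ℝ) * hstep ≤ x := by
      refine le_trans (le_min (hdle (k+1) hi.le) ?_) hx1
      have h1 := hκ_ge (k+1) h0 hi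
      have h2 : (d (k+1) : ℝ) ≤ (κ (k+1) : ℝ) := by exact_mod_cast h1
      simp only [htdef]; nlinarith
    have hcell2 : x < ((d (k+1) : ℝ) + 1) * hstep := by
      refine lt_of_lt_of_le hx2 (max_le (hdlt (k+1) hi.le).le ?_)
      have h1 := hκ_le (k+1) h0 hi
      have h2 : (κ (k+1) : ℝ) ≤ (d (k+1) : ℝ) + 1 := by exact_mod_cast h1
      simp only [htdef]; nlinarith
    have hvtx : vt x = vt ((d (k+1) : ℝ) * hstep) :=
      hvt_cell (d (k+1)) (hdN (k+1) hi) x hcell1 hcell2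
    have htk2 : s (k+1) < t (k+1+1) := by
      have h1 : mj (k+1) ≤ κ (k+1+1) := hκ_ge_mj (k+1) hi
      have h2 : (mj (k+1) : ℝ) ≤ (κ (k+1+1) : ℝ) := by exact_mod_cast h1
      have h3 := (hmj (k+1) hi).2.1
      simp only [htdef]; nlinarith
    have htk : t k ≤ (d (k+1) : ℝ) * hstep := by
      have h1 : κ k ≤ d (k+1) := by
        rcases Nat.eq_zero_or_pos k with rfl | hk0
        · rw [hκ0]; exact Nat.zero_le _
        · exact le_trans (hκ_le_mj k (by omega))
            (hmj_d k (k+1) (by omega) (by omega) (by omega))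
      have h2 : (κ k : ℝ) ≤ (d (k+1) : ℝ) := by exact_mod_cast h1
      simp only [htdef]; nlinarith
    have hsk : s k < (d (k+1):ℝ) * hstep := by
      have h1 := (hmj k (by omega)).2.1
      have h2 : mj k ≤ d (k+1) := hmj_d k (k+1) (by omega) (by omega) (by omega)
      have h2' : (mj k : ℝ) ≤ (d (k+1) : ℝ) := by exact_mod_cast h2
      nlinarith
    have htriv : |a (k+1) - a k| ≤ |a (k+1)| + |a (k+1-1)| := by
      have := abs_sub (a (k+1)) (a k)
      simpa using this
    rcases hκ_cases (k+1) h0 hi with ⟨hc, hcond⟩ | ⟨hc, hcond⟩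
    · -- rounding down: region [t (k+1), s (k+1)), old value a k, new value a (k+1)
      have hts : t (k+1) = (d (k+1) : ℝ) * hstep := by simp only [htdef, hc]
      have htles : t (k+1) ≤ s (k+1) := by rw [hts]; exact hdle (k+1) hi.le
      rw [min_eq_right htles] at hx1
      rw [max_eq_left htles] at hx2
      have hV : stepFn n s a x = a k := by
        apply stepFn_apply hs_mono' (show k < n by omega)
        · rw [hts] at hx1; linarith
        · exact hx2
      have hwv : stepFn n t a x = a (k+1) :=
        stepFn_apply htmono hi hx1 (lt_trans hx2 htk2)
      constructor
      · rw [hwv, hV, hvtx]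
        simpa using hcond
      · rw [hwv, hV]
        exact htriv
    · -- rounding up: region [s (k+1), t (k+1)), old value a (k+1), new value a k
      have hts : t (k+1) = ((d (k+1) : ℝ) + 1) * hstep := by
        simp only [htdef, hc]; push_cast; ring
      have hslet : s (k+1) ≤ t (k+1) := by rw [hts]; exact (hdlt (k+1) hi.le).le
      rw [min_eq_left hslet] at hx1
      rw [max_eq_right hslet] at hx2
      have hV : stepFn n s a x = a (k+1) := by
        apply stepFn_apply hs_mono' hi hx1
        have h1 : (d (k+1)) < mj (k+1) := hd_lt_mj (k+1) h0 hi
        have h1' : (d (k+1) : ℝ) + 1 ≤ (mj (k+1) : ℝ) := by exact_mod_cast h1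
        have h3 := (hmj (k+1) hi).2.2
        rw [hts] at hx2
        nlinarith [hhpos.le]
      have hwv : stepFn n t a x = a k := by
        apply stepFn_apply htmono (show k < n by omega)
        · calc t k ≤ (d (k+1) : ℝ) * hstep := htk
          _ ≤ s (k+1) := hdle (k+1) hi.le
          _ ≤ x := hx1
        · exact hx2
      constructor
      · rw [hwv, hV, hvtx]
        simpa using hcond
      · rw [hwv, hV, abs_sub_comm]
        exact htriv
  -- measurable representative of vt
  set vt' : ℝ → ℝ := stepFn (2 ^ k0) (fun j => (j:ℝ) * T / 2 ^ k0)
    (fun j => vt ((j:ℝ) * T / 2 ^ k0)) with hvt'def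
  have h2k : (0:ℝ) < 2 ^ k0 := by positivity
  have h2kn : (0:ℕ) < 2 ^ k0 := Nat.pow_pos (by omega)
  have hT2pos : 0 < T / 2 ^ k0 := by positivity
  have hvt'eq : ∀ x, 0 < x → x < T → vt x = vt' x := by
    intro x hx0 hxT
    set q := ⌊x / (T / 2 ^ k0)⌋₊ with hq
    have hq1 : (q:ℝ) * (T / 2 ^ k0) ≤ x := by
      have h1 : (q:ℝ) ≤ x / (T / 2 ^ k0) :=
        Nat.floor_le (div_nonneg hx0.le hT2pos.le)
      calc (q:ℝ) * (T / 2 ^ k0) ≤ (x / (T / 2 ^ k0)) * (T / 2 ^ k0) := by nlinarith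
      _ = x := by field_simp
    have hq2 : x < ((q:ℝ) + 1) * (T / 2 ^ k0) := by
      have h1 : x / (T / 2 ^ k0) < (q:ℝ) + 1 := Nat.lt_floor_add_one _
      calc x = (x / (T / 2 ^ k0)) * (T / 2 ^ k0) := by field_simp
      _ < ((q:ℝ) + 1) * (T / 2 ^ k0) := by nlinarith
    have hqk : q < 2 ^ k0 := by
      have h1 : (q:ℝ) * (T / 2 ^ k0) < ((2:ℝ) ^ k0) * (T / 2 ^ k0) := by
        apply lt_of_le_of_lt hq1
        calc x < T := hxT
        _ = ((2:ℝ) ^ k0) * (T / 2 ^ k0) := by field_simp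
      have h2 : (q:ℝ) < (2:ℝ) ^ k0 := by nlinarith
      exact_mod_cast h2
    have hmono2 : ∀ j : ℕ, j < 2 ^ k0 → (j:ℝ) * T / 2 ^ k0 ≤ ((j+1:ℕ):ℝ) * T / 2 ^ k0 := by
      intro j _
      have hj : (j:ℝ) * T ≤ ((j+1:ℕ):ℝ) * T := by push_cast; nlinarith [hT.le]
      exact (div_le_div_iff_of_pos_right h2k).2 hj
    have hval : vt' x = vt ((q:ℝ) * T / 2 ^ k0) := by
      rw [hvt'def]
      apply stepFn_apply (t := fun j => (j:ℝ) * T / 2 ^ k0) hmono2 hqk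
      · calc ((q:ℕ):ℝ) * T / 2 ^ k0 = (q:ℝ) * (T / 2 ^ k0) := by ring
        _ ≤ x := hq1
      · calc x < ((q:ℝ) + 1) * (T / 2 ^ k0) := hq2
        _ = ((q+1:ℕ):ℝ) * T / 2 ^ k0 := by push_cast; ring
    rw [hval]
    have hqcast : ((q:ℕ):ℝ) < 2 ^ k0 := by exact_mod_cast hqk
    apply hvt_pc (q:ℝ) hqcast
    · constructor
      · calc ((q:ℕ):ℝ) * T / 2 ^ k0 = (q:ℝ) * (T / 2 ^ k0) := by ring
        _ ≤ x := hq1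
      · calc x < ((q:ℝ) + 1) * (T / 2 ^ k0) := hq2
        _ = ((q:ℝ)+1) * T / 2 ^ k0 := by ring
    · constructor
      · exact le_rfl
      · have : (0:ℝ) < T / 2 ^ k0 := hT2pos
        calc ((q:ℕ):ℝ) * T / 2 ^ k0 = (q:ℝ) * (T / 2 ^ k0) := by ring
        _ < ((q:ℝ) + 1) * (T / 2 ^ k0) := by nlinarith
        _ = ((q:ℝ)+1) * T / 2 ^ k0 := by ring
  have hIoo : MeasurableSet (Set.Ioo (0:ℝ) T) := measurableSet_Ioo
  have hint_w : IntegrableOn (stepFn n t a) (Set.Ioo 0 T) := stepFn_integrableOn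
  have hint_V : IntegrableOn (stepFn n s a) (Set.Ioo 0 T) := stepFn_integrableOn
  have hint_vt' : IntegrableOn vt' (Set.Ioo 0 T) := stepFn_integrableOn
  -- goal 1 : values
  have goal1 : ∀ j < N, b j ∈ Set.range (fun i => ((ν i : ℝ))) := by
    intro j _
    rw [hbdef]
    apply ha_vals
    have := Nat.findGreatest_le (P := fun i => κ i ≤ j) (n-1)
    omega
  -- goal 2 : feasibility
  have goal2 : (∫ x in Set.Ioo 0 T, |stepFn N (fun j => (j:ℝ)*hstep) b x - vt x|) ≤ Δ := by
    have e1 : (∫ x in Set.Ioo 0 T, |stepFn N (fun j => (j:ℝ)*hstep) b x - vt x|)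
        = ∫ x in Set.Ioo 0 T, |stepFn n t a x - vt' x| :=
      setIntegral_congr_fun hIoo (fun x hx => by
        rw [hWw x hx.1.le hx.2, hvt'eq x hx.1 hx.2])
    have e2 : (∫ x in Set.Ioo 0 T, |stepFn n s a x - vt x|)
        = ∫ x in Set.Ioo 0 T, |stepFn n s a x - vt' x| :=
      setIntegral_congr_fun hIoo (fun x hx => by rw [hvt'eq x hx.1 hx.2])
    rw [e1]
    refine le_trans (setIntegral_mono_on (f := fun x => |stepFn n t a x - vt' x|)
      (g := fun x => |stepFn n s a x - vt' x|)
      ((hint_w.sub hint_vt').abs) ((hint_V.sub hint_vt').abs) hIoo ?_)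
      (by rw [← e2]; exact hfeas)
    intro x hx
    show |stepFn n t a x - vt' x| ≤ |stepFn n s a x - vt' x|
    rw [← hvt'eq x hx.1 hx.2]
    rcases key1 x hx.1 hx.2 with heq | ⟨i, h0, hi, h1, h2⟩
    · rw [heq]
    · exact (key2 i h0 hi x h1 h2).1
  -- length of the exchanged regions
  have hlen : ∀ i, 0 < i → i < n → max (s i) (t i) - min (s i) (t i) ≤ hstep := by
    intro i h0 hi
    rcases hκ_cases i h0 hi with ⟨hc,-⟩ | ⟨hc,-⟩
    · have hts : t i = (d i : ℝ) * hstep := by simp only [htdef, hc]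
      have h1 : t i ≤ s i := by rw [hts]; exact hdle i hi.le
      have h2 := hdlt i hi.le
      rw [min_eq_right h1, max_eq_left h1, hts]
      linarith
    · have hts : t i = ((d i : ℝ) + 1) * hstep := by simp only [htdef, hc]; push_cast; ring
      have h2 : s i ≤ t i := by rw [hts]; exact (hdlt i hi.le).le
      have h1 := hdle i hi.le
      rw [min_eq_left h2, max_eq_right h2, hts]
      linarith
  -- the L¹ distance between the two step functions
  have hindint : ∀ i : ℕ, IntegrableOn (Set.indicator
      (Set.Ico (min (s i) (t i)) (max (s i) (t i))) (fun _ => |a i| + |a (i-1)|))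
      (Set.Ioo (0:ℝ) T) :=
    fun i => (integrableOn_const measure_Ioo_lt_top.ne).indicator measurableSet_Ico
  have hsum_bound : (∫ x in Set.Ioo 0 T, |stepFn n t a x - stepFn n s a x|)
      ≤ ∑ i ∈ Finset.Ico 1 n, (|a i| + |a (i-1)|) * hstep := by
    have hptwise : ∀ x ∈ Set.Ioo (0:ℝ) T, |stepFn n t a x - stepFn n s a x| ≤
        ∑ i ∈ Finset.Ico 1 n, Set.indicator (Set.Ico (min (s i) (t i)) (max (s i) (t i)))
          (fun _ => |a i| + |a (i-1)|) x := by
      intro x hx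
      have hnn : ∀ j ∈ Finset.Ico 1 n, 0 ≤ Set.indicator
          (Set.Ico (min (s j) (t j)) (max (s j) (t j))) (fun _ => |a j| + |a (j-1)|) x :=
        fun j _ => Set.indicator_nonneg (fun _ _ => by positivity) x
      rcases key1 x hx.1 hx.2 with heq | ⟨i, h0, hi, h1, h2⟩
      · rw [heq, sub_self, abs_zero]
        exact Finset.sum_nonneg hnn
      · calc |stepFn n t a x - stepFn n s a x| ≤ |a i| + |a (i-1)| := (key2 i h0 hi x h1 h2).2
        _ = Set.indicator (Set.Ico (min (s i) (t i)) (max (s i) (t i)))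
            (fun _ => |a i| + |a (i-1)|) x := (Set.indicator_of_mem (Set.mem_Ico.2 ⟨h1,h2⟩) (fun _ => |a i| + |a (i-1)|)).symm
        _ ≤ _ := Finset.single_le_sum hnn (Finset.mem_Ico.2 ⟨h0, hi⟩)
    have hintsum : IntegrableOn (fun x => ∑ i ∈ Finset.Ico 1 n, Set.indicator
        (Set.Ico (min (s i) (t i)) (max (s i) (t i))) (fun _ => |a i| + |a (i-1)|) x)
        (Set.Ioo (0:ℝ) T) := integrable_finset_sum _ (fun i _ => hindint i)
    refine le_trans (setIntegral_mono_on ((hint_w.sub hint_V).abs) hintsum hIoo hptwise) ?_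
    rw [integral_finset_sum _ (fun i _ => hindint i)]
    apply Finset.sum_le_sum
    intro i hi
    rw [Finset.mem_Ico] at hi
    rw [setIntegral_indicator measurableSet_Ico, setIntegral_const, smul_eq_mul]
    have hvol : (volume (Set.Ioo 0 T ∩ Set.Ico (min (s i) (t i)) (max (s i) (t i)))).toReal
        ≤ hstep := by
      apply ENNReal.toReal_le_of_le_ofReal hhpos.le
      calc volume (Set.Ioo 0 T ∩ Set.Ico (min (s i) (t i)) (max (s i) (t i)))
          ≤ volume (Set.Ico (min (s i) (t i)) (max (s i) (t i))) :=
            measure_mono Set.inter_subset_right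
      _ = ENNReal.ofReal (max (s i) (t i) - min (s i) (t i)) := Real.volume_Ico
      _ ≤ ENNReal.ofReal hstep := ENNReal.ofReal_le_ofReal (hlen i hi.1 hi.2)
    have hnn : (0:ℝ) ≤ |a i| + |a (i-1)| := by positivity
    rw [measureReal_def]
    nlinarith [ENNReal.toReal_nonneg (a := volume (Set.Ioo 0 T ∩
      Set.Ico (min (s i) (t i)) (max (s i) (t i))))]
  have hsum2 : ∑ i ∈ Finset.Ico 1 n, (|a i| + |a (i-1)|) * hstep
      ≤ 2 * hstep * ∑ i ∈ Finset.range n, |a i| := by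
    have e1 : ∑ i ∈ Finset.Ico 1 n, (|a i| + |a (i-1)|) * hstep
        = (∑ i ∈ Finset.Ico 1 n, |a i|) * hstep + (∑ i ∈ Finset.Ico 1 n, |a (i-1)|) * hstep := by
      have e0 : ∀ i ∈ Finset.Ico 1 n, (|a i| + |a (i-1)|) * hstep
          = |a i| * hstep + |a (i-1)| * hstep := fun i _ => add_mul _ _ _
      rw [Finset.sum_congr rfl e0, Finset.sum_add_distrib, ← Finset.sum_mul, ← Finset.sum_mul]
    have hA : ∑ i ∈ Finset.Ico 1 n, |a i| ≤ ∑ i ∈ Finset.range n, |a i| := by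
      apply Finset.sum_le_sum_of_subset_of_nonneg
      · intro i hi
        rw [Finset.mem_Ico] at hi
        exact Finset.mem_range.2 hi.2
      · intro i _ _; positivity
    have hB : ∑ i ∈ Finset.Ico 1 n, |a (i-1)| ≤ ∑ i ∈ Finset.range n, |a i| := by
      rw [Finset.sum_Ico_eq_sum_range]
      have e2 : ∀ i ∈ Finset.range (n-1), |a (1 + i - 1)| = |a i| := by
        intro i _
        have h12 : 1 + i - 1 = i := by omega
        rw [h12]
      rw [Finset.sum_congr rfl e2]
      apply Finset.sum_le_sum_of_subset_of_nonneg
      · intro i hi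
        rw [Finset.mem_range] at *
        omega
      · intro i _ _; positivity
    rw [e1]
    nlinarith [Finset.sum_nonneg (fun i (_ : i ∈ Finset.range n) => abs_nonneg (a i))]
  -- integrability of products with g
  have habs_t : ∀ x, |stepFn n t a x| ≤ ∑ i ∈ Finset.range n, |a i| := abs_stepFn_le n t a
  have habs_s : ∀ x, |stepFn n s a x| ≤ ∑ i ∈ Finset.range n, |a i| := abs_stepFn_le n s a
  have hg_int_w : Integrable (fun x => g x * stepFn n t a x)
      (volume.restrict (Set.Ioo 0 T)) := by
    refine Integrable.mono' (g := fun _ => Cg * ∑ i ∈ Finset.range n, |a i|)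
      (integrableOn_const measure_Ioo_lt_top.ne)
      (hg_meas.mul (stepFn_measurable n t a).aestronglyMeasurable) ?_
    filter_upwards [hg_bdd] with x hgx
    rw [Real.norm_eq_abs, abs_mul]
    exact mul_le_mul hgx (habs_t x) (abs_nonneg _) hCg
  have hg_int_V : Integrable (fun x => g x * stepFn n s a x)
      (volume.restrict (Set.Ioo 0 T)) := by
    refine Integrable.mono' (g := fun _ => Cg * ∑ i ∈ Finset.range n, |a i|)
      (integrableOn_const measure_Ioo_lt_top.ne)
      (hg_meas.mul (stepFn_measurable n s a).aestronglyMeasurable) ?_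
    filter_upwards [hg_bdd] with x hgx
    rw [Real.norm_eq_abs, abs_mul]
    exact mul_le_mul hgx (habs_s x) (abs_nonneg _) hCg
  -- goal 4 : integral bound
  have goal4 : |(∫ x in Set.Ioo 0 T, g x * stepFn N (fun j => (j:ℝ)*hstep) b x)
      - (∫ x in Set.Ioo 0 T, g x * stepFn n s a x)|
      ≤ 2 * hstep * Cg * ∑ i ∈ Finset.range n, |a i| := by
    have e1 : (∫ x in Set.Ioo 0 T, g x * stepFn N (fun j => (j:ℝ)*hstep) b x)
        = ∫ x in Set.Ioo 0 T, g x * stepFn n t a x :=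
      setIntegral_congr_fun hIoo (fun x hx => by rw [hWw x hx.1.le hx.2])
    rw [e1, ← integral_sub hg_int_w hg_int_V]
    have h3 := norm_integral_le_integral_norm (μ := volume.restrict (Set.Ioo 0 T))
      (fun x => g x * stepFn n t a x - g x * stepFn n s a x)
    simp only [Real.norm_eq_abs] at h3
    refine le_trans h3 ?_
    have hint1 : Integrable (fun x => |g x * stepFn n t a x - g x * stepFn n s a x|)
        (volume.restrict (Set.Ioo 0 T)) := (hg_int_w.sub hg_int_V).abs
    have hint2 : Integrable (fun x => Cg * |stepFn n t a x - stepFn n s a x|)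
        (volume.restrict (Set.Ioo 0 T)) := ((hint_w.sub hint_V).abs).const_mul Cg
    have h4 : (∫ x in Set.Ioo 0 T, |g x * stepFn n t a x - g x * stepFn n s a x|)
        ≤ ∫ x in Set.Ioo 0 T, Cg * |stepFn n t a x - stepFn n s a x| := by
      apply integral_mono_ae hint1 hint2
      filter_upwards [hg_bdd] with x hgx
      rw [← mul_sub, abs_mul]
      exact mul_le_mul_of_nonneg_right hgx (abs_nonneg _)
    refine le_trans h4 ?_
    rw [integral_const_mul]
    calc Cg * ∫ x in Set.Ioo 0 T, |stepFn n t a x - stepFn n s a x|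
        ≤ Cg * ∑ i ∈ Finset.Ico 1 n, (|a i| + |a (i-1)|) * hstep :=
          mul_le_mul_of_nonneg_left hsum_bound hCg
    _ ≤ Cg * (2 * hstep * ∑ i ∈ Finset.range n, |a i|) :=
          mul_le_mul_of_nonneg_left hsum2 hCg
    _ = 2 * hstep * Cg * ∑ i ∈ Finset.range n, |a i| := by ring
  -- goal 3 : total variation
  have goal3 : TV1 0 T (stepFn N (fun j => (j:ℝ)*hstep) b) ≤ TV1 0 T (stepFn n s a) := by
    refine le_trans (le_trans (TV1_le (u := stepFn n t a)
      (fun x hx => (hWw x hx.1.le hx.2).symm)) (eVariationOn_stepFn_le hn htmono ht0 htn)) ?_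
    exact le_TV1_stepFn hn hs0 hsn hs_mono
  -- finiteness of the variations
  have hVfin : TV1 0 T (stepFn n s a) ≠ ⊤ := by
    have h1 : TV1 0 T (stepFn n s a) ≤ ∑ i ∈ Finset.range (n-1), edist (a (i+1)) (a i) :=
      le_trans (TV1_le (u := stepFn n s a) (fun x _ => rfl))
        (eVariationOn_stepFn_le hn hs_mono' hs0 hsn)
    have h2 : (∑ i ∈ Finset.range (n-1), edist (a (i+1)) (a i)) ≠ ⊤ :=
      (ENNReal.sum_lt_top.2 (fun i _ => edist_lt_top _ _)).ne
    exact fun hc => h2 (top_le_iff.1 (hc ▸ h1))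
  have hWfin : TV1 0 T (stepFn N (fun j => (j:ℝ)*hstep) b) ≠ ⊤ :=
    fun hc => hVfin (top_le_iff.1 (hc ▸ goal3))
  refine ⟨b, goal1, goal2, goal3, goal4, ?_⟩
  -- goal 5 : objective values
  rw [ennreal_coe_toReal_eq hWfin, ennreal_coe_toReal_eq hVfin,
    ← EReal.coe_mul, ← EReal.coe_mul, ← EReal.coe_add, ← EReal.coe_add, ← EReal.coe_add]
  rw [EReal.coe_le_coe_iff]
  have hττ : (TV1 0 T (stepFn N (fun j => (j:ℝ)*hstep) b)).toReal
      ≤ (TV1 0 T (stepFn n s a)).toReal := (ENNReal.toReal_le_toReal hWfin hVfin).2 goal3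
  have h4 := (abs_le.1 goal4).1
  have h5 := (abs_le.1 goal4).2
  nlinarith [mul_le_mul_of_nonneg_left hττ hα.le]
end
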